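/- arXiv:1505.01426 — 7 statements merged into one kernel-verified Lean document; each statement's English description precedes it below -/
import Mathlib

section
/- Let q ≥ 2 be an integer and let Π be a finite projective plane of order q. Then there exists a saturating set S of points of Π with |S| ≤ 2·√((q+1)·ln(q+1)) + 2. -/
/-
Greedy construction. If `u` is not yet covered by `S`, then for every `s ∈ S` the `q - 1` points
of the line `us` other than `u` and `s` each cover `u` when added to `S`, and these point sets are
disjoint because two lines through `u` meet only in `u`. Averaging over the `q² + q + 1` points,
some point covers at least a fraction `|S| (q - 1) / (q² + q + 1)` of the uncovered points. Two
points leave at most `q²` points uncovered, so after `j` further steps at most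
`q² ∏_{k<j} (1 - (k + 2)(q - 1)/(q² + q + 1)) ≤ q² exp (-(q - 1) j (j + 3) / (2 (q² + q + 1)))`
remain. For `j = ⌊2 √((q + 1) log (q + 1))⌋` this is `< 1` when `q ≥ 32`; for smaller `q` a
suitable `j` is found by direct computation.
-/

/-- A point set `S` in a projective plane (with line type `L`) is *saturating* if every point
not in `S` is collinear with two distinct points of `S`. -/
def IsSaturating (L : Type*) {P : Type*} [Membership P L] (S : Set P) : Prop :=
  ∀ Q : P, Q ∉ S → ∃ P₁ ∈ S, ∃ P₂ ∈ S, P₁ ≠ P₂ ∧ ∃ ℓ : L, Q ∈ ℓ ∧ P₁ ∈ ℓ ∧ P₂ ∈ ℓ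

open Finset Configuration ProjectivePlane

/-- The factors are truncated at `0` so that the bound is nonnegative for every `j`. -/
noncomputable def greedyBound (q j : ℕ) : ℝ :=
  q ^ 2 * ∏ k ∈ range j, max 0 (1 - (k + 2) * ((q : ℝ) - 1) / (q ^ 2 + q + 1))

section Saturation

open scoped Classical

variable {P : Type*} (L : Type*) [Membership P L]

def OnSecant (S : Set P) (Q : P) : Prop :=
  ∃ P₁ ∈ S, ∃ P₂ ∈ S, P₁ ≠ P₂ ∧ ∃ ℓ : L, Q ∈ ℓ ∧ P₁ ∈ ℓ ∧ P₂ ∈ ℓ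

variable {L}

lemma OnSecant.mono {S T : Set P} (hST : S ⊆ T) {Q : P} : OnSecant L S Q → OnSecant L T Q
  | ⟨a, ha, b, hb, hab, ℓ, hQ, haℓ, hbℓ⟩ => ⟨a, hST ha, b, hST hb, hab, ℓ, hQ, haℓ, hbℓ⟩

variable (L) [Fintype P]

noncomputable def uncovered (S : Finset P) : Finset P :=
  {Q | Q ∉ S ∧ ¬OnSecant L (S : Set P) Q}

noncomputable def newlyCovered (S : Finset P) (p : P) : Finset P :=
  uncovered L S \ uncovered L (insert p S)

variable {L}

lemma mem_uncovered {S : Finset P} {Q : P} :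
    Q ∈ uncovered L S ↔ Q ∉ S ∧ ¬OnSecant L (S : Set P) Q := by
  simp [uncovered]

lemma uncovered_anti {S T : Finset P} (hST : S ⊆ T) : uncovered L T ⊆ uncovered L S := by
  intro Q hQ
  rw [mem_uncovered] at hQ ⊢
  exact ⟨fun h => hQ.1 (hST h), fun h => hQ.2 (h.mono (by exact_mod_cast hST))⟩

lemma card_newlyCovered (S : Finset P) (p : P) :
    #(newlyCovered L S p) = #(uncovered L S) - #(uncovered L (insert p S)) :=
  card_sdiff_of_subset (uncovered_anti (subset_insert p S))

lemma uncovered_eq_empty_iff {S : Finset P} :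
    uncovered L S = ∅ ↔ IsSaturating L (S : Set P) := by
  simp only [eq_empty_iff_forall_notMem, mem_uncovered, not_and, not_not]
  exact forall_congr' fun Q => by simp [OnSecant]

variable [Finite L] [ProjectivePlane P L]

lemma card_filter_mem_line (ℓ : L) : #{p : P | p ∈ ℓ} = order P L + 1 := by
  rw [← Fintype.card_subtype, ← Nat.card_eq_fintype_card]
  exact pointCount_eq P ℓ

lemma exists_line_mem_mem (a b : P) : ∃ ℓ : L, a ∈ ℓ ∧ b ∈ ℓ := by
  obtain rfl | hab := eq_or_ne a b
  · have : 0 < lineCount L a := by rw [lineCount_eq]; omega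
    obtain ⟨ℓ, hℓ⟩ := (Nat.card_pos_iff.1 this).1
    exact ⟨ℓ, hℓ, hℓ⟩
  · exact ⟨_, HasLines.mkLine_ax hab⟩

lemma card_uncovered_pair_le {a b : P} (hab : a ≠ b) :
    #(uncovered L {a, b}) ≤ order P L ^ 2 := by
  obtain ⟨ha, hb⟩ := HasLines.mkLine_ax (L := L) hab
  have hsub : uncovered L {a, b} ⊆ ({p | p ∉ HasLines.mkLine (L := L) hab} : Finset P) := by
    intro Q hQ
    simp only [mem_filter, mem_univ, true_and]
    exact fun hQℓ => ((mem_uncovered.1 hQ).2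
      ⟨a, by simp, b, by simp, hab, _, hQℓ, ha, hb⟩)
  have hcard := card_filter_add_card_filter_not (s := univ)
    (· ∈ HasLines.mkLine (L := L) hab)
  rw [card_filter_mem_line, card_univ, card_points P L] at hcard
  have := card_le_card hsub
  omega

lemma card_mul_le_card_filter_mem_newlyCovered {S : Finset P} {u : P}
    (hu : u ∈ uncovered L S) :
    #S * (order P L - 1) ≤ #{p ∈ Sᶜ | u ∈ newlyCovered L S p} := by
  obtain ⟨huS, hu⟩ := mem_uncovered.1 hu
  choose line hline using fun s => exists_line_mem_mem (L := L) u s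
  set D : P → Finset P := fun s => ({p | p ∈ line s} : Finset P) \ {u, s}
  have mem_D {s p : P} : p ∈ D s ↔ p ∈ line s ∧ p ≠ u ∧ p ≠ s := by
    simp [D]
  have hsub : S.biUnion D ⊆ {p ∈ Sᶜ | u ∈ newlyCovered L S p} := by
    intro p hp
    obtain ⟨s, hs, hpD⟩ := mem_biUnion.1 hp
    obtain ⟨hpℓ, -, hps⟩ := mem_D.1 hpD
    have hpS : p ∉ S := fun hpS =>
      hu ⟨s, hs, p, hpS, hps.symm, line s, (hline s).1, (hline s).2, hpℓ⟩
    simp only [mem_filter, mem_compl, newlyCovered, mem_sdiff, mem_uncovered, not_and,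
      not_not, coe_insert]
    exact ⟨hpS, ⟨huS, hu⟩, fun _ => ⟨s, Set.mem_insert_of_mem _ hs, p, Set.mem_insert _ _,
      hps.symm, line s, (hline s).1, (hline s).2, hpℓ⟩⟩
  have hdisj : (S : Set P).PairwiseDisjoint D := by
    intro s hs s' hs' hss'
    refine disjoint_left.2 fun p hp hp' => ?_
    obtain ⟨hpℓ, hpu, -⟩ := mem_D.1 hp
    obtain ⟨hpℓ', -, -⟩ := mem_D.1 hp'
    obtain h | h := Nondegenerate.eq_or_eq hpℓ (hline s).1 hpℓ' (hline s').1
    · exact hpu h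
    · exact hu ⟨s, hs, s', hs', hss', line s, (hline s).1, (hline s).2, h ▸ (hline s').2⟩
  have hcard : ∀ s ∈ S, #(D s) = order P L - 1 := by
    intro s hs
    have hus : u ≠ s := fun h => huS (h ▸ hs)
    rw [card_sdiff_of_subset (by simp [insert_subset_iff, hline]), card_filter_mem_line,
      card_pair hus]
    omega
  calc #S * (order P L - 1) = #(S.biUnion D) := by
        rw [card_biUnion hdisj, sum_const_nat hcard]
    _ ≤ _ := card_le_card hsub

lemma exists_card_uncovered_mul_le_card_mul_card_newlyCovered {S : Finset P}
    (hS : #S < Fintype.card P) :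
    ∃ p ∉ S, #(uncovered L S) * (#S * (order P L - 1)) ≤
      Fintype.card P * #(newlyCovered L S p) := by
  set c := #(uncovered L S) * (#S * (order P L - 1))
  have hsum : c ≤ ∑ p ∈ Sᶜ, #(newlyCovered L S p) := by
    calc c = ∑ _u ∈ uncovered L S, #S * (order P L - 1) := by rw [sum_const, smul_eq_mul]
      _ ≤ ∑ u ∈ uncovered L S, #{p ∈ Sᶜ | u ∈ newlyCovered L S p} :=
        sum_le_sum fun u hu => card_mul_le_card_filter_mem_newlyCovered hu
      _ = ∑ p ∈ Sᶜ, #(newlyCovered L S p) := by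
        refine (sum_card_bipartiteAbove_eq_sum_card_bipartiteBelow
          (fun u p => u ∈ newlyCovered L S p)).trans (sum_congr rfl fun p _ => ?_)
        rw [bipartiteBelow, filter_mem_eq_inter, newlyCovered, inter_eq_right.2 sdiff_subset]
  have hne : (Sᶜ).Nonempty := by
    rw [← card_pos, card_compl]
    omega
  obtain ⟨p, hp, hle⟩ := exists_le_of_sum_le (f := fun _ => c)
    (g := fun p => Fintype.card P * #(newlyCovered L S p)) hne (by
      rw [sum_const, smul_eq_mul, ← mul_sum]
      exact Nat.mul_le_mul (card_le_univ _) hsum)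
  exact ⟨p, mem_compl.1 hp, hle⟩

lemma exists_card_uncovered_insert_le {S : Finset P} (hS : #S < Fintype.card P) :
    ∃ p ∉ S, (#(uncovered L (insert p S)) : ℝ) ≤
      #(uncovered L S) * max 0 (1 - #S * ((order P L : ℝ) - 1) / Fintype.card P) := by
  obtain ⟨p, hpS, hle⟩ := exists_card_uncovered_mul_le_card_mul_card_newlyCovered (L := L) hS
  refine ⟨p, hpS, ?_⟩
  have hanti := card_le_card (uncovered_anti (L := L) (subset_insert p S))
  have hN : (0 : ℝ) < Fintype.card P := by exact_mod_cast hS.trans_le' (Nat.zero_le _)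
  rw [card_newlyCovered] at hle
  have hle' : (#(uncovered L S) : ℝ) * (#S * ((order P L : ℝ) - 1)) ≤
      Fintype.card P * (#(uncovered L S) - #(uncovered L (insert p S))) := by
    rw [← Nat.cast_sub hanti, ← Nat.cast_pred (one_pos.trans (one_lt_order P L))]
    exact_mod_cast hle
  calc (#(uncovered L (insert p S)) : ℝ)
      ≤ #(uncovered L S) - #(uncovered L S) * (#S * ((order P L : ℝ) - 1)) / Fintype.card P := by
        rw [le_sub_iff_add_le, ← le_sub_iff_add_le', div_le_iff₀ hN]
        linarith
    _ = #(uncovered L S) * (1 - #S * ((order P L : ℝ) - 1) / Fintype.card P) := by ring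
    _ ≤ _ := mul_le_mul_of_nonneg_left (le_max_right _ _) (Nat.cast_nonneg _)

lemma exists_card_eq_card_uncovered_le (j : ℕ) (hj : j + 2 ≤ Fintype.card P) :
    ∃ S : Finset P, #S = j + 2 ∧ (#(uncovered L S) : ℝ) ≤ greedyBound (order P L) j := by
  induction j with
  | zero =>
    obtain ⟨a, b, hab⟩ := Fintype.exists_pair_of_one_lt_card (by omega : 1 < Fintype.card P)
    refine ⟨{a, b}, card_pair hab, ?_⟩
    simpa [greedyBound] using (Nat.cast_le (α := ℝ)).2 (card_uncovered_pair_le (L := L) hab)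
  | succ j ih =>
    obtain ⟨S, hSj, hSU⟩ := ih (by omega)
    obtain ⟨p, hpS, hp⟩ := exists_card_uncovered_insert_le (L := L) (S := S) (by omega)
    refine ⟨insert p S, by rw [card_insert_of_notMem hpS, hSj], hp.trans ?_⟩
    rw [greedyBound, prod_range_succ, ← mul_assoc, ← greedyBound, hSj, card_points P L]
    push_cast
    exact mul_le_mul_of_nonneg_right hSU (le_max_left _ _)

lemma exists_isSaturating_card_le_of_greedyBound_lt_one {j : ℕ}
    (h : greedyBound (order P L) j < 1) :
    ∃ S : Finset P, IsSaturating L (S : Set P) ∧ #S ≤ j + 2 := by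
  by_cases hj : j + 2 ≤ Fintype.card P
  · obtain ⟨S, hSj, hSU⟩ := exists_card_eq_card_uncovered_le (L := L) j hj
    have hU : #(uncovered L S) < 1 := by exact_mod_cast hSU.trans_lt h
    exact ⟨S, uncovered_eq_empty_iff.1 (card_eq_zero.1 (Nat.lt_one_iff.1 hU)), hSj.le⟩
  · refine ⟨univ, fun Q hQ => (hQ (mem_coe.2 (mem_univ Q))).elim, ?_⟩
    rw [card_univ]
    omega

end Saturation

lemma prod_max_zero_one_sub_le_exp_neg_sum {ι : Type*} (s : Finset ι) (x : ι → ℝ) :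
    ∏ i ∈ s, max 0 (1 - x i) ≤ Real.exp (-∑ i ∈ s, x i) := by
  rw [← sum_neg_distrib, Real.exp_sum]
  exact prod_le_prod (fun _ _ => le_max_left _ _) fun i _ =>
    max_le (Real.exp_pos _).le (by linarith [Real.add_one_le_exp (-x i)])

lemma sum_range_add_two (j : ℕ) : ∑ k ∈ range j, ((k : ℝ) + 2) = j * (j + 3) / 2 := by
  induction j with
  | zero => simp
  | succ j ih => rw [sum_range_succ, ih]; push_cast; ring

lemma greedyBound_lt_one {q j : ℕ} (hq : 2 ≤ q)
    (h : 4 * ((q : ℝ) ^ 2 + q + 1) * Real.log q < (q - 1) * (j * (j + 3))) :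
    greedyBound q j < 1 := by
  have hsum : ∑ k ∈ range j, ((k : ℝ) + 2) * ((q : ℝ) - 1) / (q ^ 2 + q + 1) =
      ((q : ℝ) - 1) * (j * (j + 3)) / (2 * (q ^ 2 + q + 1)) := by
    rw [← sum_div, ← sum_mul, sum_range_add_two]
    field_simp
  calc greedyBound q j ≤ q ^ 2 * Real.exp (-((q - 1) * (j * (j + 3)) / (2 * (q ^ 2 + q + 1)))) := by
        rw [← hsum]
        exact mul_le_mul_of_nonneg_left (prod_max_zero_one_sub_le_exp_neg_sum _ _) (by positivity)
    _ < q ^ 2 * Real.exp (-Real.log (q ^ 2)) := by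
        gcongr
        rw [Real.log_pow, lt_div_iff₀ (by positivity)]
        push_cast
        linarith
    _ = 1 := by
        rw [Real.exp_neg, Real.exp_log (by positivity)]
        field_simp

lemma four_mul_sq_mul_log_le {Q : ℝ} (hQ : 32 ≤ Q) :
    4 * (Q + 2) ^ 2 * Real.log Q ≤ (Q - 1) ^ 2 * (Q + 1) := by
  have hlog : Real.log Q ≤ Q / 32 + 5 / 2 := by
    have h := Real.log_le_sub_one_of_pos (x := Q / 32) (by positivity)
    rw [Real.log_div (by positivity) (by norm_num), show (32 : ℝ) = 2 ^ 5 by norm_num,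
      Real.log_pow] at h
    linarith [Real.log_two_lt_d9]
  calc 4 * (Q + 2) ^ 2 * Real.log Q ≤ 4 * (Q + 2) ^ 2 * (Q / 32 + 5 / 2) := by gcongr
    _ ≤ (Q - 1) ^ 2 * (Q + 1) := by nlinarith [mul_nonneg (sub_nonneg.2 hQ) (sub_nonneg.2 hQ)]

lemma mul_log_add_one_le_mul_log {Q : ℝ} (hQ : 0 < Q) :
    (Q + 1) * Real.log Q + 1 ≤ (Q + 1) * Real.log (Q + 1) := by
  have h := Real.one_sub_inv_le_log_of_pos (x := (Q + 1) / Q) (by positivity)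
  rw [Real.log_div (by positivity) hQ.ne', inv_div] at h
  have : (Q + 1) * (1 - Q / (Q + 1)) = 1 := by field_simp; ring
  nlinarith

lemma greedyBound_floor_lt_one {q : ℕ} (hq : 32 ≤ q) :
    greedyBound q ⌊2 * √(((q : ℝ) + 1) * Real.log (q + 1))⌋₊ < 1 := by
  apply greedyBound_lt_one (by omega)
  have hQ : (32 : ℝ) ≤ q := by exact_mod_cast hq
  set Q : ℝ := (q : ℝ)
  set t := 2 * √((Q + 1) * Real.log (Q + 1))
  have hlogQ : 0 < Real.log Q := Real.log_pos (by linarith)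
  have hgap := mul_log_add_one_le_mul_log (Q := Q) (by positivity)
  have ht0 : 0 ≤ t := mul_nonneg zero_le_two (Real.sqrt_nonneg _)
  have ht2 : t ^ 2 = 4 * ((Q + 1) * Real.log (Q + 1)) := by
    rw [mul_pow, Real.sq_sqrt (mul_nonneg (by linarith) (Real.log_nonneg (by linarith)))]
    ring
  have hkey : 4 * (Q + 2) * Real.log Q ≤ (Q - 1) * t := by
    refine le_of_pow_le_pow_left₀ two_ne_zero (by nlinarith) ?_
    rw [mul_pow (Q - 1), ht2]
    nlinarith [mul_le_mul_of_nonneg_left (four_mul_sq_mul_log_le hQ) hlogQ.le,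
      mul_le_mul_of_nonneg_left hgap (sq_nonneg (Q - 1))]
  have hj : t - 1 < ⌊t⌋₊ := by linarith [Nat.lt_floor_add_one t]
  calc 4 * (Q ^ 2 + Q + 1) * Real.log Q < (Q - 1) * ((t - 1) * (t + 2)) := by nlinarith
    _ ≤ (Q - 1) * (⌊t⌋₊ * (⌊t⌋₊ + 3)) := by
        refine mul_le_mul_of_nonneg_left ?_ (by linarith)
        nlinarith [mul_pos (sub_pos.2 hj) (by linarith : (0 : ℝ) < ⌊t⌋₊ + t + 2)]

-- From `69 / 100 < log 2` and `⌊log₂ ((q + 1) ^ 4)⌋ * log 2 ≤ 4 * log (q + 1)`; the fourth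
-- power keeps the rounding loss of `⌊log₂⌋` small enough for the witnesses below `q = 32`.
lemma natSqrt_le_two_sqrt_mul_log (q : ℕ) :
    (Nat.sqrt ((q + 1) * Nat.log 2 ((q + 1) ^ 4) * 69 / 100) : ℝ) ≤
      2 * √(((q : ℝ) + 1) * Real.log (q + 1)) := by
  set m := Nat.log 2 ((q + 1) ^ 4)
  have hj : (Nat.sqrt ((q + 1) * m * 69 / 100) : ℝ) ^ 2 ≤ ((q : ℝ) + 1) * m * (69 / 100) := by
    calc (Nat.sqrt ((q + 1) * m * 69 / 100) : ℝ) ^ 2 ≤ (((q + 1) * m * 69 / 100 : ℕ) : ℝ) := by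
          exact_mod_cast Nat.sqrt_le' _
      _ ≤ _ := by
          refine (Nat.cast_div_le).trans ?_
          push_cast
          linarith
  have hm : (m : ℝ) * Real.log 2 ≤ 4 * Real.log (q + 1) := by
    rw [← Real.log_pow, show (4 : ℝ) = (4 : ℕ) by norm_num, ← Real.log_pow]
    refine Real.log_le_log (by positivity) ?_
    exact_mod_cast Nat.pow_log_le_self 2 (by positivity)
  have hlog : 0 ≤ ((q : ℝ) + 1) * Real.log (q + 1) :=
    mul_nonneg (by positivity) (Real.log_nonneg (by simp))
  refine le_of_pow_le_pow_left₀ two_ne_zero (by positivity) ?_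
  rw [mul_pow, Real.sq_sqrt hlog]
  nlinarith [Real.log_two_gt_d9, mul_le_mul_of_nonneg_left hm (by positivity : (0 : ℝ) ≤ q + 1)]

set_option maxHeartbeats 4000000 in
lemma greedyBound_natSqrt_lt_one {q : ℕ} (hq : 2 ≤ q) (hq' : q < 32) :
    greedyBound q (Nat.sqrt ((q + 1) * Nat.log 2 ((q + 1) ^ 4) * 69 / 100)) < 1 := by
  interval_cases q <;> norm_num [greedyBound, prod_range_succ]

lemma exists_le_two_sqrt_mul_log_greedyBound_lt_one {q : ℕ} (hq : 2 ≤ q) :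
    ∃ j : ℕ, (j : ℝ) ≤ 2 * √(((q : ℝ) + 1) * Real.log (q + 1)) ∧ greedyBound q j < 1 := by
  obtain hsmall | hlarge := lt_or_ge q 32
  · exact ⟨_, natSqrt_le_two_sqrt_mul_log q, greedyBound_natSqrt_lt_one hq hsmall⟩
  · exact ⟨_, Nat.floor_le (by positivity), greedyBound_floor_lt_one hlarge⟩

theorem smallest_saturating_set_bound_general (q : ℕ)
    (P L : Type*) [Fintype P] [Fintype L] [Membership P L]
    [Configuration.ProjectivePlane P L]
    (horder : Configuration.ProjectivePlane.order P L = q) :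
    ∃ S : Finset P, IsSaturating L (↑S : Set P) ∧
      (S.card : ℝ) ≤ 2 * Real.sqrt ((q + 1) * Real.log (q + 1)) + 2 := by
  subst horder
  obtain ⟨j, hj, hbound⟩ := exists_le_two_sqrt_mul_log_greedyBound_lt_one (one_lt_order P L)
  obtain ⟨S, hS, hcard⟩ := exists_isSaturating_card_le_of_greedyBound_lt_one (L := L) hbound
  refine ⟨S, hS, ?_⟩
  calc (S.card : ℝ) ≤ j + 2 := by exact_mod_cast hcard
    _ ≤ _ := by linarith

theorem smallest_saturating_set_bound (q : ℕ) (hq : 2 ≤ q)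
    (P L : Type*) [Fintype P] [Fintype L] [Membership P L]
    [Configuration.ProjectivePlane P L]
    (horder : Configuration.ProjectivePlane.order P L = q) :
    ∃ S : Finset P, IsSaturating L (↑S : Set P) ∧
      (S.card : ℝ) ≤ 2 * Real.sqrt ((q + 1) * Real.log (q + 1)) + 2 :=
  smallest_saturating_set_bound_general q P L horder
end

section
/- Let q ≥ 2 be an integer, let Π be a finite projective plane of order q, let c ≥ 1 be a real number, and let k be an integer with 2c·√((q+1)·ln(q+1)) + 2 ≤ k and k < (q^2−1)/(q+2). Then the number of k-element point subsets of Π that are saturating is greater than (1 − 1/(q+1)^(2c^2−2)) · C(q^2+q+1, k), where C(n, k) denotes the binomial coefficient; equivalently, a uniformly random k-element point subset of Π is saturating with probability greater than 1 − 1/(q+1)^(2c^2−2). -/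
open Finset Real Configuration ProjectivePlane
open scoped Classical

section InjOnCount

variable {X I : Type*}

theorem card_filter_injOn_image_eq_le (U : Finset X) (g : X → I) (T : Finset I) :
    #(U.powerset.filter fun S : Finset X ↦ Set.InjOn g S ∧ S.image g = T) ≤
      ∏ i ∈ T, #{x ∈ U | g x = i} := by
  rw [← card_pi]
  refine card_le_card_of_surjOn (fun σ ↦ T.attach.image fun i ↦ σ i.1 i.2) ?_
  rintro S hS
  simp only [coe_filter, mem_powerset, Set.mem_ofPred_eq] at hS
  obtain ⟨hSU, hinj, rfl⟩ := hS
  have hsec : ∀ i ∈ S.image g, ∃ x ∈ S, g x = i := fun i hi ↦ mem_image.mp hi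
  choose σ hσS hσg using hsec
  refine ⟨σ, mem_pi.mpr fun i hi ↦ mem_filter.mpr ⟨hSU (hσS i hi), hσg i hi⟩, ?_⟩
  ext x
  rw [mem_image]
  constructor
  · rintro ⟨⟨i, hi⟩, -, rfl⟩
    exact hσS i hi
  · intro hx
    exact ⟨⟨g x, mem_image_of_mem g hx⟩, mem_attach _ _, hinj (hσS _ _) hx (hσg _ _)⟩

theorem card_powersetCard_filter_injOn_le (U : Finset X) (g : X → I) (k m : ℕ)
    (hm : ∀ x ∈ U, #{y ∈ U | g y = g x} ≤ m) :
    #((U.powersetCard k).filter fun S : Finset X ↦ Set.InjOn g S) ≤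
      (#(U.image g)).choose k * m ^ k := by
  rw [← card_powersetCard, mul_comm]
  refine card_le_mul_card_image_of_maps_to (f := fun S ↦ S.image g) ?_ _ ?_
  · intro S hS
    obtain ⟨hS, hinj⟩ := mem_filter.mp hS
    obtain ⟨hSU, rfl⟩ := mem_powersetCard.mp hS
    exact mem_powersetCard.mpr ⟨image_subset_image hSU, card_image_of_injOn hinj⟩
  · intro T hT
    obtain ⟨hTU, rfl⟩ := mem_powersetCard.mp hT
    calc #{S ∈ (U.powersetCard #T).filter (fun S : Finset X ↦ Set.InjOn g S) | S.image g = T}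
        ≤ #(U.powerset.filter fun S : Finset X ↦ Set.InjOn g S ∧ S.image g = T) := by
          refine card_le_card fun S hS ↦ ?_
          simp only [mem_filter, mem_powersetCard, mem_powerset] at hS ⊢
          exact ⟨hS.1.1.1, hS.1.2, hS.2⟩
      _ ≤ ∏ i ∈ T, #{x ∈ U | g x = i} := card_filter_injOn_image_eq_le U g T
      _ ≤ m ^ #T := prod_le_pow_card _ _ _ fun i hi ↦ by
          obtain ⟨x, hx, rfl⟩ := mem_image.mp (hTU hi)
          exact hm x hx

end InjOnCount

theorem Nat.cast_descFactorial_eq_prod_range {R : Type*} [CommRing R] {n k : ℕ} (h : k ≤ n) :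
    (n.descFactorial k : R) = ∏ i ∈ range k, ((n : R) - i) := by
  rw [Nat.descFactorial_eq_prod_range, Nat.cast_prod]
  refine prod_congr rfl fun i hi ↦ ?_
  rw [Nat.cast_sub (by rw [mem_range] at hi; omega)]

theorem Finset.sum_range_natCast_mul_two {R : Type*} [CommRing R] (k : ℕ) :
    (∑ i ∈ range k, (i : R)) * 2 = k * (k - 1) := by
  induction k with
  | zero => simp
  | succ n ih => rw [sum_range_succ, add_mul, ih]; push_cast; ring

theorem mul_sub_le_exp_mul_sub {x i : ℝ} (hx : 1 ≤ x) (hi₀ : 0 ≤ i) (hi : i ≤ x + 1) :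
    x * (x + 1 - i) ≤ exp (-(i * (x - 1) / (x * (x + 1)))) * (x ^ 2 + x + 1 - i) := by
  have hD : 0 < x * (x + 1) := by positivity
  set t := i * (x - 1) / (x * (x + 1))
  have ht : t ≤ 1 := by
    rw [div_le_one hD]; nlinarith
  calc x * (x + 1 - i) ≤ (1 - t) * (x ^ 2 + x + 1 - i) := by
        rw [one_sub_div hD.ne', div_mul_eq_mul_div, le_div_iff₀ hD]
        nlinarith [mul_nonneg (mul_nonneg hi₀ hi₀) (by linarith : (0 : ℝ) ≤ x - 1)]
    _ ≤ exp (-t) * (x ^ 2 + x + 1 - i) := by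
        gcongr
        · nlinarith
        · linarith [add_one_le_exp (-t)]

theorem choose_mul_pow_le_exp_mul_choose {q k : ℕ} (hq : 1 ≤ q) (hk : k ≤ q + 1) :
    ((q + 1).choose k : ℝ) * q ^ k ≤
      exp (-((q - 1) * k * (k - 1) / (2 * (q * (q + 1))))) * (q ^ 2 + q + 1).choose k := by
  have hq' : (1 : ℝ) ≤ q := by exact_mod_cast hq
  rw [← mul_le_mul_iff_of_pos_right (Nat.cast_pos.mpr k.factorial_pos)]
  have hlhs : ((q + 1).choose k : ℝ) * q ^ k * k.factorial =
      ∏ i ∈ range k, ((q : ℝ) * (q + 1 - i)) := by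
    rw [prod_mul_distrib, prod_const, card_range, mul_right_comm, ← Nat.cast_mul,
      mul_comm _ k.factorial, ← Nat.descFactorial_eq_factorial_mul_choose,
      Nat.cast_descFactorial_eq_prod_range hk, mul_comm]
    push_cast; rfl
  have hrhs : exp (-((q - 1) * k * (k - 1) / (2 * (q * (q + 1))))) *
      ((q ^ 2 + q + 1).choose k : ℝ) * k.factorial =
      ∏ i ∈ range k, exp (-(i * (q - 1) / (q * (q + 1)))) * ((q : ℝ) ^ 2 + q + 1 - i) := by
    have hexp : ∑ i ∈ range k, -(i * ((q : ℝ) - 1) / (q * (q + 1))) =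
        -((q - 1) * k * (k - 1) / (2 * (q * (q + 1)))) := by
      rw [sum_neg_distrib, ← sum_div, ← sum_mul,
        eq_div_of_mul_eq (two_ne_zero (α := ℝ)) (sum_range_natCast_mul_two k), div_mul_eq_mul_div,
        div_div]
      ring
    rw [prod_mul_distrib, ← exp_sum, hexp, mul_assoc, ← Nat.cast_mul, mul_comm _ k.factorial,
      ← Nat.descFactorial_eq_factorial_mul_choose,
      Nat.cast_descFactorial_eq_prod_range (by nlinarith)]
    push_cast
    rfl
  have hiq : ∀ i ∈ range k, (i : ℝ) ≤ q := fun i hi ↦ by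
    have := mem_range.mp hi
    exact_mod_cast (by omega : i ≤ q)
  rw [hlhs, hrhs]
  refine prod_le_prod (fun i hi ↦ ?_) fun i hi ↦ ?_
  · exact mul_nonneg (by positivity) (by linarith [hiq i hi])
  · exact mul_sub_le_exp_mul_sub hq' i.cast_nonneg (by linarith [hiq i hi])

theorem two_mul_sq_mul_log_le {x c k : ℝ} (hc : 0 ≤ c)
    (hk : 2 * c * √((x + 1) * log (x + 1)) + 2 ≤ k) (hkx : k ≤ x - 1) :
    2 * c ^ 2 * log (x + 1) ≤ (x - 1) * k * (k - 1) / (2 * (x * (x + 1))) := by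
  set A := 2 * c * √((x + 1) * log (x + 1))
  have hA : 0 ≤ A := by positivity
  have hx : 3 ≤ x := by linarith
  have hA2 : A ^ 2 = 4 * c ^ 2 * ((x + 1) * log (x + 1)) := by
    rw [mul_pow, mul_pow, sq_sqrt (mul_nonneg (by linarith) (log_nonneg (by linarith)))]
    ring
  rw [le_div_iff₀ (by positivity)]
  have hkk : (A + 2) * (A + 1) ≤ k * (k - 1) :=
    mul_le_mul hk (by linarith) (by linarith) (by linarith)
  nlinarith [mul_le_mul_of_nonneg_left hkk (by linarith : (0 : ℝ) ≤ x - 1)]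

theorem mul_choose_mul_pow_lt_choose_div_rpow {q k : ℕ} {c : ℝ} (hc : 0 ≤ c) (hkq : k + 1 ≤ q)
    (hk : 2 * c * √((q + 1) * log (q + 1)) + 2 ≤ k) :
    ((q : ℝ) ^ 2 + q + 1) * ((q + 1).choose k * q ^ k) <
      (q ^ 2 + q + 1).choose k / ((q : ℝ) + 1) ^ (2 * c ^ 2 - 2) := by
  have hkq' : (k : ℝ) ≤ q - 1 := by
    rw [le_sub_iff_add_le]; exact_mod_cast hkq
  set E := ((q : ℝ) - 1) * k * (k - 1) / (2 * (q * (q + 1)))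
  have hC : (0 : ℝ) < exp (-E) * (q ^ 2 + q + 1).choose k :=
    mul_pos (exp_pos _) (Nat.cast_pos.mpr (Nat.choose_pos (by nlinarith)))
  have hq1 : (0 : ℝ) < q + 1 := by positivity
  have hrpow : ((q : ℝ) + 1) ^ 2 * exp (-(2 * c ^ 2 * log (q + 1))) =
      1 / ((q : ℝ) + 1) ^ (2 * c ^ 2 - 2) := by
    rw [rpow_sub hq1, rpow_two, rpow_def_of_pos hq1, one_div_div, exp_neg, mul_comm (log _),
      div_eq_mul_inv]
  rw [div_eq_mul_one_div, ← hrpow]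
  calc ((q : ℝ) ^ 2 + q + 1) * ((q + 1).choose k * q ^ k)
      ≤ ((q : ℝ) ^ 2 + q + 1) * (exp (-E) * (q ^ 2 + q + 1).choose k) :=
        mul_le_mul_of_nonneg_left (choose_mul_pow_le_exp_mul_choose (by omega) (by omega))
          (by positivity)
    _ < ((q : ℝ) + 1) ^ 2 * (exp (-E) * (q ^ 2 + q + 1).choose k) :=
        mul_lt_mul_of_pos_right (by nlinarith) hC
    _ ≤ ((q : ℝ) + 1) ^ 2 * (exp (-(2 * c ^ 2 * log (q + 1))) * (q ^ 2 + q + 1).choose k) := by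
        gcongr
        exact two_mul_sq_mul_log_le hc hk hkq'
    _ = _ := by ring

section Saturation

variable (L : Type*) {P : Type*} [Membership P L]

def IsOnSecant (S : Set P) (Q : P) : Prop :=
  ∃ P₁ ∈ S, ∃ P₂ ∈ S, P₁ ≠ P₂ ∧ ∃ ℓ : L, Q ∈ ℓ ∧ P₁ ∈ ℓ ∧ P₂ ∈ ℓ

theorem isSaturating_iff {S : Set P} : IsSaturating L S ↔ ∀ Q ∉ S, IsOnSecant L S Q :=
  Iff.rfl

variable {L}

theorem injOn_of_not_isOnSecant {S : Set P} {Q : P} (line : P → L)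
    (hline : ∀ x ≠ Q, Q ∈ line x ∧ x ∈ line x) (hQ : Q ∉ S) (h : ¬IsOnSecant L S Q) :
    S.InjOn line := by
  intro x hx y hy hxy
  by_contra hne
  have hxQ : x ≠ Q := fun h ↦ hQ (h ▸ hx)
  have hyQ : y ≠ Q := fun h ↦ hQ (h ▸ hy)
  exact h ⟨x, hx, y, hy, hne, line x, (hline x hxQ).1, (hline x hxQ).2, hxy ▸ (hline y hyQ).2⟩

theorem natCard_isSaturating_add_card_not_isSaturating [Fintype P] (k : ℕ) :
    Nat.card {S : Finset P // S.card = k ∧ IsSaturating L (S : Set P)} +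
      #((univ.powersetCard k).filter fun S : Finset P ↦ ¬IsSaturating L (S : Set P)) =
        (Fintype.card P).choose k := by
  rw [Nat.card_eq_fintype_card, Fintype.card_subtype, ← filter_filter, univ_filter_card_eq,
    card_filter_add_card_filter_not, card_powersetCard, card_univ]

end Saturation

section ProjectivePlane

variable {P L : Type*} [Membership P L] [ProjectivePlane P L]

theorem card_filter_mem_eq_order_add_one [Fintype P] [Finite L] (ℓ : L) :
    #{x : P | x ∈ ℓ} = order P L + 1 := by
  rw [← pointCount_eq P ℓ, pointCount, Nat.card_eq_fintype_card, Fintype.card_subtype]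

theorem card_filter_lines_eq_order_add_one [Finite P] [Fintype L] (Q : P) :
    #{ℓ : L | Q ∈ ℓ} = order P L + 1 := by
  rw [← lineCount_eq L Q, lineCount, Nat.card_eq_fintype_card, Fintype.card_subtype]

theorem card_filter_not_isOnSecant_le [Fintype P] [Fintype L] (Q : P) (k : ℕ) :
    #((univ.powersetCard k).filter fun S : Finset P ↦ Q ∉ S ∧ ¬IsOnSecant L (S : Set P) Q) ≤
      (order P L + 1).choose k * order P L ^ k := by
  obtain ⟨ℓ₀, -⟩ := Nondegenerate.exists_line (L := L) Q
  let line : P → L := fun x ↦ if h : x = Q then ℓ₀ else HasLines.mkLine h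
  have hline : ∀ x ≠ Q, Q ∈ line x ∧ x ∈ line x := fun x hx ↦ by
    simp only [line, dif_neg hx]
    exact (HasLines.mkLine_ax hx).symm
  have hfiber : ∀ x ∈ univ.erase Q, #{y ∈ univ.erase Q | line y = line x} ≤ order P L := by
    intro x hx
    have hsub : {y ∈ univ.erase Q | line y = line x} ⊆
        ({y : P | y ∈ line x} : Finset P).erase Q := by
      intro y hy
      simp only [mem_filter, mem_erase, mem_univ, and_true, true_and] at hy ⊢
      exact ⟨hy.1, hy.2 ▸ (hline y hy.1).2⟩
    refine (card_le_card hsub).trans_eq ?_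
    rw [card_erase_of_mem (by simpa using (hline x (ne_of_mem_erase hx)).1),
      card_filter_mem_eq_order_add_one, Nat.add_sub_cancel]
  have himage : #((univ.erase Q).image line) ≤ order P L + 1 := by
    rw [← card_filter_lines_eq_order_add_one (P := P) Q]
    refine card_le_card fun ℓ hℓ ↦ ?_
    obtain ⟨x, hx, rfl⟩ := mem_image.mp hℓ
    simpa using (hline x (ne_of_mem_erase hx)).1
  calc _ ≤ #((univ.erase Q).powersetCard k |>.filter fun S : Finset P ↦ Set.InjOn line S) := by
        refine card_le_card fun S hS ↦ ?_
        simp only [mem_filter, mem_powersetCard] at hS ⊢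
        obtain ⟨⟨-, hcard⟩, hQ, hsec⟩ := hS
        exact ⟨⟨fun x hx ↦ mem_erase.mpr ⟨fun h ↦ hQ (h ▸ hx), mem_univ x⟩, hcard⟩,
          injOn_of_not_isOnSecant line hline (by simpa using hQ) hsec⟩
    _ ≤ (#((univ.erase Q).image line)).choose k * order P L ^ k :=
        card_powersetCard_filter_injOn_le _ line k _ hfiber
    _ ≤ (order P L + 1).choose k * order P L ^ k :=
        Nat.mul_le_mul_right _ (Nat.choose_le_choose k himage)

theorem card_filter_not_isSaturating_le [Fintype P] [Fintype L] (k : ℕ) :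
    #((univ.powersetCard k).filter fun S : Finset P ↦ ¬IsSaturating L (S : Set P)) ≤
      Fintype.card P * ((order P L + 1).choose k * order P L ^ k) := by
  calc _ ≤ #(univ.biUnion fun Q ↦ (univ.powersetCard k).filter
          fun S : Finset P ↦ Q ∉ S ∧ ¬IsOnSecant L (S : Set P) Q) := by
        refine card_le_card fun S hS ↦ ?_
        obtain ⟨hS, hsat⟩ := mem_filter.mp hS
        rw [isSaturating_iff] at hsat
        push Not at hsat
        obtain ⟨Q, hQ, hsec⟩ := hsat
        exact mem_biUnion.mpr ⟨Q, mem_univ Q, mem_filter.mpr ⟨hS, hQ, hsec⟩⟩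
    _ ≤ ∑ Q, #((univ.powersetCard k).filter
          fun S : Finset P ↦ Q ∉ S ∧ ¬IsOnSecant L (S : Set P) Q) := card_biUnion_le
    _ ≤ Fintype.card P * ((order P L + 1).choose k * order P L ^ k) := by
        rw [← smul_eq_mul, ← card_univ]
        exact sum_le_card_nsmul _ _ _ fun Q _ ↦ card_filter_not_isOnSecant_le Q k

end ProjectivePlane

theorem random_subset_is_saturating_general (q : ℕ)
    (P L : Type*) [Fintype P] [Fintype L] [Membership P L]
    [Configuration.ProjectivePlane P L]
    (horder : Configuration.ProjectivePlane.order P L = q)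
    (c : ℝ) (hc : 1 ≤ c) (k : ℕ)
    (hk₁ : 2 * c * Real.sqrt ((q + 1) * Real.log (q + 1)) + 2 ≤ (k : ℝ))
    (hk₂ : (k : ℝ) < ((q : ℝ) ^ 2 - 1) / ((q : ℝ) + 2)) :
    (1 - 1 / ((q : ℝ) + 1) ^ (2 * c ^ 2 - 2)) * ((q ^ 2 + q + 1).choose k : ℝ) <
      (Nat.card {S : Finset P // S.card = k ∧ IsSaturating L (↑S : Set P)} : ℝ) := by
  have hkq : k + 1 ≤ q := by
    by_contra! h
    rw [lt_div_iff₀ (by positivity)] at hk₂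
    have : (q : ℝ) ≤ k := by exact_mod_cast Nat.lt_succ_iff.mp h
    nlinarith
  have hsplit := natCard_isSaturating_add_card_not_isSaturating (L := L) (P := P) k
  have hbad := card_filter_not_isSaturating_le (L := L) (P := P) k
  rw [card_points P L, horder] at hsplit hbad
  have hsplitR := congrArg (Nat.cast : ℕ → ℝ) hsplit
  have hbadR : (_ : ℝ) ≤ _ := Nat.cast_le.mpr hbad
  push_cast at hsplitR hbadR
  have hnum := mul_choose_mul_pow_lt_choose_div_rpow (by linarith) hkq hk₁
  rw [sub_mul, one_mul, one_div_mul_eq_div]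
  linarith

theorem random_subset_is_saturating (q : ℕ) (hq : 2 ≤ q)
    (P L : Type*) [Fintype P] [Fintype L] [Membership P L]
    [Configuration.ProjectivePlane P L]
    (horder : Configuration.ProjectivePlane.order P L = q)
    (c : ℝ) (hc : 1 ≤ c) (k : ℕ)
    (hk₁ : 2 * c * Real.sqrt ((q + 1) * Real.log (q + 1)) + 2 ≤ (k : ℝ))
    (hk₂ : (k : ℝ) < ((q : ℝ) ^ 2 - 1) / ((q : ℝ) + 2)) :
    (1 - 1 / ((q : ℝ) + 1) ^ (2 * c ^ 2 - 2)) * ((q ^ 2 + q + 1).choose k : ℝ) <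
      (Nat.card {S : Finset P // S.card = k ∧ IsSaturating L (↑S : Set P)} : ℝ) :=
  random_subset_is_saturating_general q P L horder c hc k hk₁ hk₂
end

section
/- Let q be a prime power and let F_q be a finite field with q elements. Then there exist a natural number n with 3 ≤ n ≤ 2·√((q+1)·ln(q+1)) + 2 and an F_q-linear subspace C of F_q^n of dimension n − 3 such that every vector of F_q^n is at Hamming distance at most 2 from some element of C (i.e., C is a q-ary linear code of length n, codimension 3, and covering radius at most 2). In particular, the length function ℓ(2,3,q) satisfies ℓ(2,3,q) ≤ 2·√((q+1)·ln(q+1)) + 2. -/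
/-!
Take as parity-check matrix the columns `(1, t i, u i)` for `i < m` together with `(0, 1, 0)` and
`(0, 0, 1)`. A syndrome `s` with `s 0 ≠ 0` is, up to scaling, a point `(1, y, z)`, and it is a
combination of two columns as soon as `(y, z)` lies on a line through two of the points
`(t i, u i)`, or on a vertical or horizontal line through one of them. Choose `t` injective and
`u` arbitrary, uniformly at random. A choice that fails at `(y, z)` is determined by `t`, which
avoids `y`, and by the slopes `(u i - z) / (t i - y)`, which are distinct and nonzero, so at
most `((q - 1)_m)²` of the `(q)_m q^m` choices fail there. A union bound over the `q²` points
succeeds when `q² ((q - 1)_m)² < (q)_m q^m`; by `1 - x ≤ e^{-x}` this follows from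
`4 q log q < m (m + 3)`, which holds for `m = ⌊2 √((q + 1) log (q + 1))⌋`. If that `m` is at
least `q`, take `m = q` instead: then `t` is onto and every point is covered.
-/

open Finset Function Real

section Codes

variable {F ι : Type*} [Field F] [DecidableEq F] [Fintype ι]

theorem hammingNorm_single_add_single_le_two {β : Type*} [AddMonoid β] [DecidableEq β]
    [DecidableEq ι] (i j : ι) (a b : β) :
    hammingNorm (Pi.single i a + Pi.single j b : ι → β) ≤ 2 := by
  calc hammingNorm (Pi.single i a + Pi.single j b : ι → β) ≤ #{i, j} := by
        refine card_le_card fun k hk => ?_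
        by_contra hk'
        simp only [mem_insert, mem_singleton, not_or] at hk'
        simp [Pi.single_eq_of_ne hk'.1, Pi.single_eq_of_ne hk'.2] at hk
    _ ≤ 2 := card_le_two

theorem exists_hammingNorm_le_two_of_smul_add_smul_eq {M : Type*} [AddCommGroup M] [Module F M]
    (h : ι → M) {s : M} (i j : ι) (a b : F) (hs : a • h i + b • h j = s) :
    ∃ c : ι → F, hammingNorm c ≤ 2 ∧ Fintype.linearCombination F h c = s := by
  classical
  exact ⟨Pi.single i a + Pi.single j b, hammingNorm_single_add_single_le_two i j a b,
    by simpa using hs⟩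

theorem exists_submodule_hammingDist_le_of_forall_syndrome {M : Type*} [AddCommGroup M]
    [Module F M] [FiniteDimensional F M] (h : ι → M) (ρ : ℕ)
    (hcover : ∀ s : M, ∃ c : ι → F, hammingNorm c ≤ ρ ∧ Fintype.linearCombination F h c = s) :
    ∃ C : Submodule F (ι → F), Module.finrank F C = Fintype.card ι - Module.finrank F M ∧
      ∀ v : ι → F, ∃ c ∈ C, hammingDist v c ≤ ρ := by
  set φ := Fintype.linearCombination F h
  have hrange : LinearMap.range φ = ⊤ :=
    LinearMap.range_eq_top.2 fun s => (hcover s).imp fun _ => And.right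
  refine ⟨LinearMap.ker φ, ?_, fun v => ?_⟩
  · have := LinearMap.finrank_range_add_finrank_ker φ
    rw [hrange, finrank_top, Module.finrank_fintype_fun_eq_card] at this
    omega
  · obtain ⟨c, hc, hφc⟩ := hcover (φ v)
    refine ⟨v - c, by simp [hφc], ?_⟩
    rwa [hammingDist_comm, hammingDist_eq_hammingNorm, neg_sub, sub_add_cancel]

end Codes

section Plane

variable {F : Type*} [Field F]

def planeColumns {m : ℕ} (t u : Fin m → F) : Fin (m + 2) → Fin 3 → F :=
  Fin.append (fun i => ![1, t i, u i]) ![![0, 1, 0], ![0, 0, 1]]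

/-- The point `(y, z)` of the affine plane lies on the vertical or the horizontal line through some
`(t i, u i)`, or on the line through two of these points. -/
def CoversPoint {ι : Type*} (t u : ι → F) (y z : F) : Prop :=
  (∃ i, t i = y) ∨ (∃ i, u i = z) ∨ ∃ i j, i ≠ j ∧ (u i - z) * (t j - y) = (u j - z) * (t i - y)

variable [DecidableEq F] {m : ℕ} {t u : Fin m → F}

theorem exists_hammingNorm_le_two_of_coversPoint (ht : Injective t) {y z : F}
    (hyz : CoversPoint t u y z) : ∃ c : Fin (m + 2) → F, hammingNorm c ≤ 2 ∧
      Fintype.linearCombination F (planeColumns t u) c = ![1, y, z] := by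
  have hleft (i : Fin m) : planeColumns t u (Fin.castAdd 2 i) = ![1, t i, u i] :=
    Fin.append_left ..
  have hright (k : Fin 2) : planeColumns t u (Fin.natAdd m k) = ![![0, 1, 0], ![0, 0, 1]] k :=
    Fin.append_right ..
  rcases hyz with ⟨i, rfl⟩ | ⟨i, rfl⟩ | ⟨i, j, hij, hcross⟩
  · refine exists_hammingNorm_le_two_of_smul_add_smul_eq _ (Fin.castAdd 2 i) (Fin.natAdd m 1)
      1 (z - u i) ?_
    rw [hleft, hright]
    ext k; fin_cases k <;> simp
  · refine exists_hammingNorm_le_two_of_smul_add_smul_eq _ (Fin.castAdd 2 i) (Fin.natAdd m 0)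
      1 (y - t i) ?_
    rw [hleft, hright]
    ext k; fin_cases k <;> simp
  · have htij : t j - t i ≠ 0 := sub_ne_zero.2 (ht.ne hij.symm)
    refine exists_hammingNorm_le_two_of_smul_add_smul_eq _ (Fin.castAdd 2 i) (Fin.castAdd 2 j)
      ((t j - y) / (t j - t i)) ((y - t i) / (t j - t i)) ?_
    rw [hleft, hleft]
    ext k; fin_cases k <;> simp <;> field_simp
    · ring
    · ring
    · linear_combination hcross

theorem exists_hammingNorm_le_two_of_forall_coversPoint (ht : Injective t)
    (hcov : ∀ y z, CoversPoint t u y z) (s : Fin 3 → F) : ∃ c : Fin (m + 2) → F,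
      hammingNorm c ≤ 2 ∧ Fintype.linearCombination F (planeColumns t u) c = s := by
  by_cases hs : s 0 = 0
  · refine exists_hammingNorm_le_two_of_smul_add_smul_eq _ (Fin.natAdd m 0) (Fin.natAdd m 1)
      (s 1) (s 2) ?_
    simp only [planeColumns, Fin.append_right]
    ext k; fin_cases k <;> simp [hs]
  · obtain ⟨c, hc, hφc⟩ :=
      exists_hammingNorm_le_two_of_coversPoint ht (hcov (s 1 / s 0) (s 2 / s 0))
    refine ⟨s 0 • c, hammingNorm_smul_le_hammingNorm.trans hc, ?_⟩
    rw [map_smul, hφc]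
    ext k; fin_cases k <;> simp [mul_div_cancel₀ _ hs]

end Plane

section Counting

variable {F ι : Type*} [Field F] [Fintype F] [Fintype ι]

open scoped Classical in
theorem card_not_coversPoint_le (y z : F) :
    #{p : (ι ↪ F) × (ι → F) | ¬CoversPoint p.1 p.2 y z} ≤
      ((Fintype.card F - 1).descFactorial (Fintype.card ι)) ^ 2 := by
  let Ψ : (ι ↪ {x // x ≠ y}) × (ι ↪ {x : F // x ≠ 0}) → (ι ↪ F) × (ι → F) := fun p =>
    (p.1.trans (Embedding.subtype _), fun i => z + p.2 i * (p.1 i - y))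
  calc #{p : (ι ↪ F) × (ι → F) | ¬CoversPoint p.1 p.2 y z}
      ≤ #(univ.image Ψ) := by
        refine card_le_card fun p hp => ?_
        obtain ⟨hty, huz, hslope⟩ : (∀ i, p.1 i ≠ y) ∧ (∀ i, p.2 i ≠ z) ∧
            ∀ i j, i ≠ j → (p.2 i - z) * (p.1 j - y) ≠ (p.2 j - z) * (p.1 i - y) := by
          simpa [CoversPoint] using hp
        have hden (i) : p.1 i - y ≠ 0 := sub_ne_zero.2 (hty i)
        refine mem_image.2
          ⟨(⟨fun i => ⟨p.1 i, hty i⟩, fun i j h => p.1.injective (by simpa using h)⟩,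
          ⟨fun i => ⟨(p.2 i - z) / (p.1 i - y), div_ne_zero (sub_ne_zero.2 (huz i)) (hden i)⟩,
            fun i j h => ?_⟩), mem_univ _, ?_⟩
        · by_contra hij
          refine hslope i j hij ?_
          simpa [div_eq_div_iff (hden i) (hden j)] using h
        · ext i
          · rfl
          · change z + (p.2 i - z) / (p.1 i - y) * (p.1 i - y) = p.2 i
            rw [div_mul_cancel₀ _ (hden i), add_sub_cancel]
    _ ≤ _ := card_image_le
    _ = _ := by simp [Fintype.card_embedding_eq, sq]

theorem exists_forall_coversPoint
    (h : Fintype.card F ^ 2 * ((Fintype.card F - 1).descFactorial (Fintype.card ι)) ^ 2 <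
      (Fintype.card F).descFactorial (Fintype.card ι) * Fintype.card F ^ Fintype.card ι) :
    ∃ (t : ι ↪ F) (u : ι → F), ∀ y z, CoversPoint t u y z := by
  classical
  let bad := (univ : Finset (F × F)).biUnion fun yz =>
    {p : (ι ↪ F) × (ι → F) | ¬CoversPoint p.1 p.2 yz.1 yz.2}
  have hbad : #bad < #(univ : Finset ((ι ↪ F) × (ι → F))) := calc
    #bad ≤ ∑ yz : F × F, #{p : (ι ↪ F) × (ι → F) | ¬CoversPoint p.1 p.2 yz.1 yz.2} :=
      card_biUnion_le
    _ ≤ ∑ _yz : F × F, ((Fintype.card F - 1).descFactorial (Fintype.card ι)) ^ 2 :=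
      sum_le_sum fun yz _ => card_not_coversPoint_le yz.1 yz.2
    _ < _ := by simpa [Fintype.card_embedding_eq, sq] using h
  obtain ⟨⟨t, u⟩, -, hgood⟩ := exists_mem_notMem_of_card_lt_card hbad
  refine ⟨t, u, fun y z => ?_⟩
  by_contra hyz
  exact hgood (mem_biUnion.2 ⟨(y, z), mem_univ _, by simpa using hyz⟩)

end Counting

theorem natCast_sub_le_mul_exp (q i : ℕ) : ((q - i : ℕ) : ℝ) ≤ q * exp (-(i / q)) := by
  rcases le_or_gt i q with hiq | hqi
  · rcases Nat.eq_zero_or_pos q with rfl | hq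
    · simp
    calc ((q - i : ℕ) : ℝ) = q * (-(i / q) + 1) := by
          rw [Nat.cast_sub hiq]; field_simp; ring
      _ ≤ q * exp (-(i / q)) := by gcongr; exact add_one_le_exp _
  · rw [Nat.sub_eq_zero_of_le hqi.le, Nat.cast_zero]
    positivity

theorem sum_range_natCast (m : ℕ) : ∑ i ∈ range m, (i : ℝ) = m * (m - 1) / 2 := by
  induction m with
  | zero => simp
  | succ m ih => rw [sum_range_succ, ih]; push_cast; ring

theorem descFactorial_le_pow_mul_exp (q m : ℕ) :
    (q.descFactorial m : ℝ) ≤ q ^ m * exp (-(m * (m - 1) / 2 / q)) := calc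
  (q.descFactorial m : ℝ) = ∏ i ∈ range m, ((q - i : ℕ) : ℝ) := by
    rw [Nat.descFactorial_eq_prod_range, Nat.cast_prod]
  _ ≤ ∏ i ∈ range m, (q * exp (-(i / q))) :=
    prod_le_prod (fun _ _ => Nat.cast_nonneg _) fun i _ => natCast_sub_le_mul_exp q i
  _ = q ^ m * exp (-(m * (m - 1) / 2 / q)) := by
    rw [prod_mul_distrib, prod_const, card_range, ← exp_sum, sum_neg_distrib, ← sum_div,
      sum_range_natCast]

theorem sub_sq_mul_descFactorial_lt_pow {q m : ℕ} (hq : 0 < q)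
    (h : 4 * q * log q < m * (m + 3)) : (q - m) ^ 2 * q.descFactorial m < q ^ m := by
  have hq' : (0 : ℝ) < q := Nat.cast_pos.2 hq
  have hsq : (q : ℝ) ^ 2 * exp (-(m * (m + 3) / 2 / q)) < 1 := by
    rw [exp_neg, ← div_eq_mul_inv, div_lt_one (exp_pos _), ← exp_log (pow_pos hq' 2), exp_lt_exp,
      log_pow, lt_div_iff₀ hq']
    push_cast
    linarith
  have hexp : exp (-(m / q)) ^ 2 * exp (-(m * (m - 1) / 2 / q)) =
      exp (-(m * (m + 3) / 2 / q)) := by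
    rw [← exp_nat_mul, ← exp_add]
    congr 1
    field_simp
    ring
  suffices ((q - m : ℕ) : ℝ) ^ 2 * q.descFactorial m < (q : ℝ) ^ m by exact_mod_cast this
  calc ((q - m : ℕ) : ℝ) ^ 2 * q.descFactorial m
      ≤ (q * exp (-(m / q))) ^ 2 * (q ^ m * exp (-(m * (m - 1) / 2 / q))) := by
        gcongr
        · exact natCast_sub_le_mul_exp q m
        · exact descFactorial_le_pow_mul_exp q m
    _ = q ^ m * (q ^ 2 * exp (-(m * (m + 3) / 2 / q))) := by rw [← hexp]; ring
    _ < q ^ m * 1 := by gcongr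
    _ = q ^ m := mul_one _

theorem mul_descFactorial_sub_one (q m : ℕ) :
    q * (q - 1).descFactorial m = (q - m) * q.descFactorial m := by
  cases q with
  | zero => simp
  | succ p => rw [Nat.add_sub_cancel, ← Nat.succ_descFactorial_succ, Nat.descFactorial_succ]

theorem sq_mul_descFactorial_sq_lt {q m : ℕ} (hmq : m ≤ q) (h : 4 * q * log q < m * (m + 3)) :
    q ^ 2 * ((q - 1).descFactorial m) ^ 2 < q.descFactorial m * q ^ m := by
  have hq : 0 < q := by
    by_contra! hq
    obtain rfl : q = 0 := by omega
    obtain rfl : m = 0 := by omega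
    simp at h
  have hpos : 0 < q.descFactorial m :=
    Nat.pos_of_ne_zero (by simpa [Nat.descFactorial_eq_zero_iff_lt])
  calc q ^ 2 * ((q - 1).descFactorial m) ^ 2
        = (q - m) ^ 2 * q.descFactorial m * q.descFactorial m := by
        rw [← mul_pow, mul_descFactorial_sub_one]; ring
    _ < q ^ m * q.descFactorial m := by gcongr; exact sub_sq_mul_descFactorial_lt_pow hq h
    _ = q.descFactorial m * q ^ m := mul_comm _ _

theorem exists_le_two_mul_sqrt_and_sq_mul_descFactorial_sq_lt (q : ℕ) (hq : 2 ≤ q) :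
    ∃ m : ℕ, 1 ≤ m ∧ (m : ℝ) ≤ 2 * √((q + 1) * log (q + 1)) ∧
      q ^ 2 * ((q - 1).descFactorial m) ^ 2 < q.descFactorial m * q ^ m := by
  set s := √((q + 1) * log (q + 1))
  by_cases hqs : (q : ℝ) ≤ 2 * s
  · refine ⟨q, by omega, hqs, ?_⟩
    rw [(Nat.descFactorial_eq_zero_iff_lt).2 (by omega), Nat.descFactorial_self]
    positivity
  rw [not_le] at hqs
  have hq' : (2 : ℝ) ≤ q := by exact_mod_cast hq
  have hlog : 2 / 3 ≤ log (q + 1) := by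
    have := one_sub_inv_le_log_of_pos (by positivity : (0 : ℝ) < q + 1)
    have : ((q : ℝ) + 1)⁻¹ ≤ 1 / 3 := by rw [inv_le_comm₀ (by positivity) (by norm_num)]; linarith
    linarith
  have hlogq : log q ≤ log (q + 1) := log_le_log (by positivity) (by linarith)
  have hs : s ^ 2 = (q + 1) * log (q + 1) := sq_sqrt (by positivity)
  have hs0 : 0 ≤ s := sqrt_nonneg _
  set m := ⌊2 * s⌋₊
  have hm_le : (m : ℝ) ≤ 2 * s := Nat.floor_le (by positivity)
  have hm_gt : 2 * s < m + 1 := Nat.lt_floor_add_one _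
  have hm1 : (1 : ℝ) ≤ m := by nlinarith
  refine ⟨m, by exact_mod_cast hm1, hm_le, sq_mul_descFactorial_sq_lt ?_ ?_⟩
  · exact_mod_cast (hm_le.trans hqs.le)
  · nlinarith

theorem covering_code_length_bound (q : ℕ) (F : Type*) [Field F] [Fintype F] [DecidableEq F]
    (hF : Fintype.card F = q) :
    ∃ n : ℕ, 3 ≤ n ∧ (n : ℝ) ≤ 2 * Real.sqrt ((q + 1) * Real.log (q + 1)) + 2 ∧
      ∃ C : Submodule F (Fin n → F), Module.finrank F C = n - 3 ∧
        ∀ v : Fin n → F, ∃ c ∈ C, hammingDist v c ≤ 2 := by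
  subst hF
  obtain ⟨m, hm, hlen, hcount⟩ :=
    exists_le_two_mul_sqrt_and_sq_mul_descFactorial_sq_lt _ (Fintype.one_lt_card (α := F))
  obtain ⟨t, u, hcov⟩ := exists_forall_coversPoint (F := F) (ι := Fin m) (by simpa using hcount)
  obtain ⟨C, hC, hcover⟩ := exists_submodule_hammingDist_le_of_forall_syndrome (planeColumns t u) 2
    (exists_hammingNorm_le_two_of_forall_coversPoint t.injective hcov)
  exact ⟨m + 2, by omega, by push_cast; linarith, C, by simpa using hC, hcover⟩
end

section
/- Let q ≥ 2 and w ≥ 1 be integers, let Π be a finite projective plane of order q, and fix a point A of Π. Then the number of (w+1)-element point subsets K of Π such that A is not covered by K (i.e., no line of Π contains A and at least two distinct points of K) equals q^(w+1) · C(q+1, w+1), where C(n, k) denotes the binomial coefficient. -/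
/-- A point `A` is *covered* by a point set `K` if some line contains `A` and at least two
distinct points of `K`. -/
def Covers (L : Type*) {P : Type*} [Membership P L] (K : Set P) (A : P) : Prop :=
  ∃ ℓ : L, A ∈ ℓ ∧ ∃ P₁ ∈ K, ∃ P₂ ∈ K, P₁ ≠ P₂ ∧ P₁ ∈ ℓ ∧ P₂ ∈ ℓ

open Finset in
/-- Abstract counting lemma: if all fibers of `f : α → β` have size `m`, then the number of
`n`-element subsets of `α` on which `f` is injective is `m ^ n * (card β).choose n`. -/
lemma count_injOn_subsets {α β : Type*} [Fintype α] [Fintype β] [DecidableEq α] [DecidableEq β]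
    (f : α → β) (m n : ℕ) (hf : ∀ b, (univ.filter (fun a => f a = b)).card = m) :
    Nat.card {K : Finset α // K.card = n ∧ Set.InjOn f ↑K} =
      m ^ n * (Fintype.card β).choose n := by
  classical
  rw [Nat.card_eq_fintype_card, Fintype.card_subtype]
  set 𝒦 := univ.filter (fun K : Finset α => K.card = n ∧ Set.InjOn f ↑K) with h𝒦
  set 𝒯 := univ.filter (fun T : Finset β => T.card = n) with h𝒯
  have hmap : ∀ K ∈ 𝒦, K.image f ∈ 𝒯 := by
    intro K hK
    simp only [h𝒦, h𝒯, mem_filter, mem_univ, true_and] at *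
    rw [Finset.card_image_of_injOn hK.2, hK.1]
  rw [Finset.card_eq_sum_card_fiberwise hmap]
  have key : ∀ T ∈ 𝒯, (𝒦.filter (fun K => K.image f = T)).card = m ^ n := by
    intro T hT
    simp only [h𝒯, mem_filter, mem_univ, true_and] at hT
    have hcardpi : (T.pi (fun b => univ.filter (fun a => f a = b))).card = m ^ n := by
      rw [Finset.card_pi]
      simp only [hf]
      rw [Finset.prod_const, hT]
    rw [← hcardpi]
    -- for each K in the fiber, there is a unique preimage of each b ∈ T
    have huniq : ∀ K, K ∈ 𝒦.filter (fun K => K.image f = T) → ∀ b ∈ T,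
        ∃! a, a ∈ K ∧ f a = b := by
      intro K hK b hb
      simp only [h𝒦, mem_filter, mem_univ, true_and] at hK
      obtain ⟨⟨hcard, hinj⟩, himg⟩ := hK
      rw [← himg] at hb
      obtain ⟨a, ha, hfa⟩ := Finset.mem_image.mp hb
      exact ⟨a, ⟨ha, hfa⟩, fun a' ha' => hinj ha'.1 ha (ha'.2.trans hfa.symm)⟩
    have hj : ∀ g ∈ T.pi (fun b => univ.filter (fun a => f a = b)),
        T.attach.image (fun b => g b.1 b.2) ∈ 𝒦.filter (fun K => K.image f = T) := by
      intro g hg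
      rw [Finset.mem_pi] at hg
      have hfg : ∀ (b : β) (hb : b ∈ T), f (g b hb) = b := by
        intro b hb
        have := hg b hb
        simpa only [mem_filter, mem_univ, true_and] using this
      have hginj : ∀ (b₁ : {x // x ∈ T}) (b₂ : {x // x ∈ T}),
          g b₁.1 b₁.2 = g b₂.1 b₂.2 → b₁ = b₂ := by
        intro b₁ b₂ h
        have : f (g b₁.1 b₁.2) = f (g b₂.1 b₂.2) := by rw [h]
        rw [hfg, hfg] at this
        exact Subtype.ext this
      have hcardimg : (T.attach.image (fun b => g b.1 b.2)).card = n := by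
        rw [Finset.card_image_of_injOn (fun b₁ _ b₂ _ h => hginj b₁ b₂ h),
          Finset.card_attach, hT]
      have himg : (T.attach.image (fun b => g b.1 b.2)).image f = T := by
        rw [Finset.image_image]
        have : (f ∘ fun b : {x // x ∈ T} => g b.1 b.2) = fun b => b.1 :=
          funext fun b => hfg b.1 b.2
        rw [this, Finset.attach_image_val]
      simp only [mem_filter, h𝒦, mem_univ, true_and]
      refine ⟨⟨hcardimg, ?_⟩, himg⟩
      intro a₁ h₁ a₂ h₂ hfa
      simp only [Finset.coe_image, Set.mem_image, Finset.mem_coe, Finset.mem_attach,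
        true_and] at h₁ h₂
      obtain ⟨b₁, hb₁⟩ := h₁
      obtain ⟨b₂, hb₂⟩ := h₂
      rw [← hb₁, ← hb₂] at hfa ⊢
      have hb : b₁ = b₂ := hginj b₁ b₂ (by
        have : (b₁ : β) = b₂ := by rwa [hfg, hfg] at hfa
        exact Subtype.ext this ▸ rfl)
      subst hb
      rfl
    refine Finset.card_bij' (fun K hK => fun b hb => K.choose (fun a => f a = b) (huniq K hK b hb))
      (fun g _ => T.attach.image (fun b => g b.1 b.2)) ?_ ?_ ?_ ?_
    · intro K hK
      rw [Finset.mem_pi]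
      intro b hb
      simp only [mem_filter, mem_univ, true_and]
      exact Finset.choose_property (fun a => f a = b) K (huniq K hK b hb)
    · intro g hg
      exact hj g hg
    · intro K hK
      have hsub : T.attach.image
          (fun b => K.choose (fun a => f a = b.1) (huniq K hK b.1 b.2)) ⊆ K := by
        intro a ha
        simp only [Finset.mem_image] at ha
        obtain ⟨b, _, hb⟩ := ha
        rw [← hb]
        exact Finset.choose_mem _ _ _
      have hKc : K.card = n := by
        have := (Finset.mem_filter.mp (Finset.mem_filter.mp hK).1).2
        exact this.1
      refine Finset.eq_of_subset_of_card_le hsub ?_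
      rw [hKc]
      have : (T.attach.image
          (fun b => K.choose (fun a => f a = b.1) (huniq K hK b.1 b.2))).card = n := by
        rw [Finset.card_image_of_injOn, Finset.card_attach, hT]
        intro b₁ _ b₂ _ h
        have h1 := Finset.choose_property (fun a => f a = b₁.1) K (huniq K hK b₁.1 b₁.2)
        have h2 := Finset.choose_property (fun a => f a = b₂.1) K (huniq K hK b₂.1 b₂.2)
        apply Subtype.ext
        rw [← h1, ← h2]
        exact congrArg f h
      exact this.ge
    · intro g hg
      funext b
      funext hb
      have hmem : g b hb ∈ T.attach.image (fun b' : {x // x ∈ T} => g b'.1 b'.2) :=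
        Finset.mem_image.mpr ⟨⟨b, hb⟩, Finset.mem_attach _ _, rfl⟩
      have hfgb : f (g b hb) = b := by
        have := Finset.mem_pi.mp hg b hb
        simpa only [mem_filter, mem_univ, true_and] using this
      exact (huniq _ (hj g hg) b hb).unique
        ⟨Finset.choose_mem _ _ _,
          Finset.choose_property (fun a => f a = b) _ (huniq _ (hj g hg) b hb)⟩ ⟨hmem, hfgb⟩
  rw [Finset.sum_congr rfl key, Finset.sum_const, smul_eq_mul]
  have h𝒯card : 𝒯.card = (Fintype.card β).choose n := by
    have : 𝒯 = Finset.powersetCard n univ := by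
      rw [Finset.powersetCard_eq_filter, Finset.powerset_univ]
    rw [this, Finset.card_powersetCard, Finset.card_univ]
  rw [h𝒯card, mul_comm]

open Configuration Configuration.ProjectivePlane in
theorem card_subsets_not_covering (q w : ℕ) (hq : 2 ≤ q) (hw : 1 ≤ w)
    (P L : Type*) [Fintype P] [Fintype L] [Membership P L]
    [Configuration.ProjectivePlane P L]
    (horder : Configuration.ProjectivePlane.order P L = q) (A : P) :
    Nat.card {K : Finset P // K.card = w + 1 ∧ ¬ Covers L (↑K : Set P) A} =
      q ^ (w + 1) * (q + 1).choose (w + 1) := by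
  classical
  -- the line through a point `p ≠ A` and `A`
  have uniq : ∀ (p : P) (hp : p ≠ A) (ℓ : L), p ∈ ℓ → A ∈ ℓ →
      Configuration.HasLines.mkLine hp = ℓ := fun p hp ℓ h1 h2 =>
    (Configuration.Nondegenerate.eq_or_eq (Configuration.HasLines.mkLine_ax hp).1
      (Configuration.HasLines.mkLine_ax hp).2 h1 h2).resolve_left hp
  set f : {p : P // p ≠ A} → {ℓ : L // A ∈ ℓ} :=
    fun p => ⟨Configuration.HasLines.mkLine p.2, (Configuration.HasLines.mkLine_ax p.2).2⟩
    with hf_def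
  -- the equivalence between the two kinds of subsets
  have hAnotmem : ∀ (K : Finset P), K.card = w + 1 → ¬ Covers L (↑K : Set P) A → A ∉ K := by
    intro K hcard hnc hA
    obtain ⟨p, hpK, hpA⟩ := Finset.exists_mem_ne (show 1 < K.card by omega) A
    exact hnc ⟨Configuration.HasLines.mkLine hpA, (Configuration.HasLines.mkLine_ax hpA).2,
      p, hpK, A, hA, hpA, (Configuration.HasLines.mkLine_ax hpA).1,
      (Configuration.HasLines.mkLine_ax hpA).2⟩
  have hmapsub : ∀ (K : Finset P), A ∉ K →
      (K.subtype (· ≠ A)).map (Function.Embedding.subtype _) = K := by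
    intro K hA
    ext x
    simp only [Finset.mem_map, Function.Embedding.coe_subtype]
    constructor
    · rintro ⟨y, hy, rfl⟩
      exact Finset.mem_subtype.mp hy
    · intro hx
      exact ⟨⟨x, fun h => hA (h ▸ hx)⟩, Finset.mem_subtype.mpr hx, rfl⟩
  let e : {K : Finset P // K.card = w + 1 ∧ ¬ Covers L (↑K : Set P) A} ≃
      {K : Finset {p : P // p ≠ A} // K.card = w + 1 ∧ Set.InjOn f ↑K} :=
    { toFun := fun K => ⟨K.1.subtype (· ≠ A), by
        obtain ⟨K, hcard, hnc⟩ := K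
        have hA : A ∉ K := hAnotmem K hcard hnc
        constructor
        · rw [← Finset.card_map (Function.Embedding.subtype _), hmapsub K hA, hcard]
        · intro x hx y hy hxy
          replace hx : x.1 ∈ K := Finset.mem_subtype.mp (Finset.mem_coe.mp hx)
          replace hy : y.1 ∈ K := Finset.mem_subtype.mp (Finset.mem_coe.mp hy)
          by_contra hne
          have hne' : x.1 ≠ y.1 := fun h => hne (Subtype.ext h)
          have hxy' : Configuration.HasLines.mkLine x.2 = Configuration.HasLines.mkLine y.2 :=
            congrArg Subtype.val hxy
          exact hnc ⟨Configuration.HasLines.mkLine x.2,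
            (Configuration.HasLines.mkLine_ax x.2).2, x.1, hx, y.1, hy, hne',
            (Configuration.HasLines.mkLine_ax x.2).1,
            hxy' ▸ (Configuration.HasLines.mkLine_ax y.2).1⟩⟩
      invFun := fun K => ⟨K.1.map (Function.Embedding.subtype _), by
        obtain ⟨K, hcard, hinj⟩ := K
        constructor
        · rw [Finset.card_map, hcard]
        · rintro ⟨ℓ, hAℓ, p₁, hp₁K, p₂, hp₂K, hne, h1, h2⟩
          simp only [Finset.coe_map, Set.mem_image, Finset.mem_coe,
            Function.Embedding.coe_subtype] at hp₁K hp₂K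
          obtain ⟨x, hx, hx'⟩ := hp₁K
          obtain ⟨y, hy, hy'⟩ := hp₂K
          subst hx'; subst hy'
          have : f x = f y := by
            apply Subtype.ext
            simp only [hf_def]
            rw [uniq x.1 x.2 ℓ h1 hAℓ, uniq y.1 y.2 ℓ h2 hAℓ]
          exact hne (congrArg Subtype.val
            (hinj (Finset.mem_coe.mpr hx) (Finset.mem_coe.mpr hy) this))⟩
      left_inv := fun K => by
        apply Subtype.ext
        exact hmapsub K.1 (hAnotmem K.1 K.2.1 K.2.2)
      right_inv := fun K => by
        apply Subtype.ext
        simp only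
        ext x
        simp only [Finset.mem_subtype, Finset.mem_map, Function.Embedding.coe_subtype]
        constructor
        · rintro ⟨y, hy, hyx⟩
          rwa [← Subtype.ext hyx]
        · intro hx
          exact ⟨x, hx, rfl⟩ }
  rw [Nat.card_congr e]
  -- fibers of `f` have size `q`
  have hfiber : ∀ s : {ℓ : L // A ∈ ℓ},
      (Finset.univ.filter (fun p : {p : P // p ≠ A} => f p = s)).card = q := by
    intro s
    have : (Finset.univ.filter (fun p : {p : P // p ≠ A} => f p = s)).card =
        ((Finset.univ.filter (fun p : P => p ∈ s.1)).erase A).card := by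
      refine Finset.card_bij' (fun p _ => p.1)
        (fun p hp => ⟨p, (Finset.mem_erase.mp hp).1⟩) ?_ ?_ ?_ ?_
      · intro p hp
        simp only [Finset.mem_filter, Finset.mem_univ, true_and] at hp
        rw [Finset.mem_erase]
        refine ⟨p.2, Finset.mem_filter.mpr ⟨Finset.mem_univ _, ?_⟩⟩
        have : p.1 ∈ (Configuration.HasLines.mkLine p.2 : L) :=
          (Configuration.HasLines.mkLine_ax p.2).1
        rwa [show (Configuration.HasLines.mkLine p.2 : L) = s.1 from
          congrArg Subtype.val hp] at this
      · intro p hp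
        simp only [Finset.mem_filter, Finset.mem_univ, true_and]
        apply Subtype.ext
        simp only [hf_def]
        have hmem : p ∈ s.1 :=
          (Finset.mem_filter.mp (Finset.mem_erase.mp hp).2).2
        exact uniq p (Finset.mem_erase.mp hp).1 s.1 hmem s.2
      · intro p _; rfl
      · intro p _; rfl
    rw [this, Finset.card_erase_of_mem (Finset.mem_filter.mpr ⟨Finset.mem_univ _, s.2⟩)]
    have hpc : (Finset.univ.filter (fun p : P => p ∈ s.1)).card = q + 1 := by
      have := Configuration.ProjectivePlane.pointCount_eq P s.1
      rw [horder] at this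
      rw [← this, Configuration.pointCount, Nat.card_eq_fintype_card, Fintype.card_subtype]
    rw [hpc]
    omega
  rw [count_injOn_subsets f q (w + 1) hfiber]
  congr 1
  have := Configuration.ProjectivePlane.lineCount_eq L A
  rw [horder] at this
  rw [← this, Configuration.lineCount, Nat.card_eq_fintype_card]
end

section
/- Let q ≥ 2 and w ≥ 1 be integers with w < (q^2−1)/(q+2). Then q^(w+1) · C(q+1, w+1) / C(q^2+q+1, w+1) < exp(−w^2/(2q+2)), where C(n, k) denotes the binomial coefficient. -/
/-!
Writing `N = q² + q + 1`, the left-hand side is the product over `i ≤ w` of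
`q (q + 1 - i) / (N - i) = 1 - yᵢ` with `yᵢ = (1 + (q - 1) i) / (N - i) ∈ (0, 1)`, so it is below
`exp (-∑ yᵢ)`. Replacing `N - i` by `N` and summing gives
`∑ yᵢ ≥ (w + 1)(2 + (q - 1) w) / (2N)`, which is at least `w² / (2q + 2)` as soon as
`w (q + 2) ≤ (q + 1)²`.
-/

open Finset Real

theorem Nat.cast_choose_div_cast_choose {K : Type*} [Field K] [CharZero K] (m n k : ℕ) :
    (m.choose k : K) / n.choose k = ∏ i ∈ range k, ((m : K) - i) / ((n : K) - i) := by
  rw [cast_choose_eq_descPochhammer_div, cast_choose_eq_descPochhammer_div,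
    div_div_div_cancel_right₀ (cast_ne_zero.2 k.factorial_ne_zero),
    descPochhammer_eval_eq_prod_range, descPochhammer_eval_eq_prod_range, prod_div_distrib]

theorem Real.prod_one_sub_lt_exp_neg_sum {ι : Type*} {s : Finset ι} {y : ι → ℝ}
    (hs : s.Nonempty) (hpos : ∀ i ∈ s, 0 < y i) (hlt : ∀ i ∈ s, y i < 1) :
    ∏ i ∈ s, (1 - y i) < exp (-∑ i ∈ s, y i) :=
  calc ∏ i ∈ s, (1 - y i)
      < ∏ i ∈ s, exp (-y i) :=
        prod_lt_prod_of_nonempty (fun i hi ↦ sub_pos.2 (hlt i hi))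
          (fun i hi ↦ one_sub_lt_exp_neg (hpos i hi).ne') hs
    _ = exp (-∑ i ∈ s, y i) := by rw [← sum_neg_distrib, exp_sum]

theorem Finset.sum_range_cast_id (n : ℕ) : ∑ i ∈ range (n + 1), (i : ℝ) = n * (n + 1) / 2 := by
  have h := congrArg (Nat.cast (R := ℝ)) (sum_range_id_mul_two (n + 1))
  push_cast at h
  linarith

namespace ProjectivePlane

noncomputable def coverDeficit (q i : ℝ) : ℝ := (1 + (q - 1) * i) / (q ^ 2 + q + 1 - i)

theorem mul_div_eq_one_sub_coverDeficit {q i : ℝ} (h : q ^ 2 + q + 1 - i ≠ 0) :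
    q * (q + 1 - i) / (q ^ 2 + q + 1 - i) = 1 - coverDeficit q i := by
  rw [coverDeficit, eq_sub_iff_add_eq, ← add_div, div_eq_one_iff_eq h]
  ring

theorem coverDeficit_pos {q i : ℝ} (hq : 1 ≤ q) (hi₀ : 0 ≤ i) (hi : i < q + 1) :
    0 < coverDeficit q i :=
  div_pos (by nlinarith) (by nlinarith)

theorem coverDeficit_lt_one {q i : ℝ} (hq : 1 ≤ q) (hi : i < q + 1) :
    coverDeficit q i < 1 :=
  (div_lt_one (by nlinarith)).2 (by nlinarith)

theorem sq_div_le_sum_coverDeficit {q : ℝ} {w : ℕ} (hq : 1 ≤ q)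
    (hw : (w : ℝ) * (q + 2) ≤ (q + 1) ^ 2) :
    (w : ℝ) ^ 2 / (2 * q + 2) ≤ ∑ i ∈ range (w + 1), coverDeficit q i := by
  have hwq : (w : ℝ) < q + 1 := by nlinarith
  calc (w : ℝ) ^ 2 / (2 * q + 2)
      ≤ (w + 1) * (1 + (q - 1) * w / 2) / (q ^ 2 + q + 1) := by
        rw [div_le_div_iff₀ (by positivity) (by positivity)]
        nlinarith [mul_le_mul_of_nonneg_left hw (by positivity : (0 : ℝ) ≤ w)]
    _ = ∑ i ∈ range (w + 1), (1 + (q - 1) * i) / (q ^ 2 + q + 1) := by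
        rw [← sum_div, sum_add_distrib, ← mul_sum, sum_range_cast_id, sum_const, card_range]
        simp only [nsmul_eq_mul, Nat.cast_add, Nat.cast_one, mul_one]
        ring
    _ ≤ ∑ i ∈ range (w + 1), coverDeficit q i := by
        refine sum_le_sum fun i hi ↦ ?_
        have hiw : (i : ℝ) ≤ w := by exact_mod_cast Nat.lt_succ_iff.1 (mem_range.1 hi)
        have hi₀ : (0 : ℝ) ≤ i := i.cast_nonneg
        exact div_le_div_of_nonneg_left (by nlinarith) (by nlinarith) (by linarith)

end ProjectivePlane

open ProjectivePlane in
theorem pi_estimate_general (q w : ℕ)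
    (hwq : (w : ℝ) < ((q : ℝ) ^ 2 - 1) / ((q : ℝ) + 2)) :
    ((q ^ (w + 1) * (q + 1).choose (w + 1) : ℕ) : ℝ) / (((q ^ 2 + q + 1).choose (w + 1) : ℕ) : ℝ)
      < Real.exp (-(w : ℝ) ^ 2 / (2 * q + 2)) := by
  have hwq' : (w : ℝ) * (q + 2) < q ^ 2 - 1 := (lt_div_iff₀ (by positivity)).1 hwq
  have hq : (1 : ℝ) ≤ q := by nlinarith [(w.cast_nonneg : (0 : ℝ) ≤ w)]
  have hiq : ∀ i ∈ range (w + 1), (i : ℝ) < q + 1 := fun i hi ↦ by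
    have : (i : ℝ) ≤ w := by exact_mod_cast Nat.lt_succ_iff.1 (mem_range.1 hi)
    nlinarith
  calc _ = ∏ i ∈ range (w + 1), (1 - coverDeficit q i) := by
          rw [Nat.cast_mul, mul_div_assoc, Nat.cast_choose_div_cast_choose, Nat.cast_pow]
          nth_rw 1 [← card_range (w + 1)]
          rw [pow_card_mul_prod]
          refine prod_congr rfl fun i hi ↦ ?_
          push_cast
          rw [← mul_div_assoc, mul_div_eq_one_sub_coverDeficit (by nlinarith [hiq i hi])]
    _ < exp (-∑ i ∈ range (w + 1), coverDeficit q i) :=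
      prod_one_sub_lt_exp_neg_sum nonempty_range_add_one
        (fun i hi ↦ coverDeficit_pos hq i.cast_nonneg (hiq i hi))
        (fun i hi ↦ coverDeficit_lt_one hq (hiq i hi))
    _ ≤ exp (-(w : ℝ) ^ 2 / (2 * q + 2)) := by
      rw [exp_le_exp, neg_div, neg_le_neg_iff]
      exact sq_div_le_sum_coverDeficit hq (by nlinarith)

theorem pi_estimate (q w : ℕ) (hq : 2 ≤ q) (hw : 1 ≤ w)
    (hwq : (w : ℝ) < ((q : ℝ) ^ 2 - 1) / ((q : ℝ) + 2)) :
    ((q ^ (w + 1) * (q + 1).choose (w + 1) : ℕ) : ℝ) / (((q ^ 2 + q + 1).choose (w + 1) : ℕ) : ℝ)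
      < Real.exp (-(w : ℝ) ^ 2 / (2 * q + 2)) :=
  pi_estimate_general q w hwq
end

section
/- Let q ≥ 2 and w ≥ 1 be integers with w < (q^2−1)/(q+2), and let Π be a finite projective plane of order q. Then the number of (w+1)-element point subsets of Π that are NOT saturating is less than (q+1)^2 · exp(−w^2/(2q+2)) · C(q^2+q+1, w+1), where C(n, k) denotes the binomial coefficient. -/
open Finset Configuration Configuration.ProjectivePlane

namespace SatAux


open scoped Classical

/-- `Q` witnesses non-saturation of `K`. -/
def BadAt (L : Type*) {P : Type*} [Membership P L] (Q : P) (K : Finset P) : Prop :=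
  Q ∉ K ∧ ∀ x ∈ K, ∀ y ∈ K, x ≠ y → ∀ ℓ : L, ¬(Q ∈ ℓ ∧ x ∈ ℓ ∧ y ∈ ℓ)

lemma nonempty_line (P L : Type*) [Membership P L] [Configuration.ProjectivePlane P L] :
    Nonempty L := by
  obtain ⟨p₁, p₂, p₃, l₁, l₂, l₃, -⟩ :=
    Configuration.ProjectivePlane.exists_config (P := P) (L := L)
  exact ⟨l₁⟩

variable {P L : Type*} [Membership P L] [Configuration.ProjectivePlane P L]

/-- The line through `x` and `Q` (junk value if `x = Q`). -/
noncomputable def lineThru (Q x : P) : L :=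
  if h : x ≠ Q then Configuration.HasLines.mkLine h else (nonempty_line P L).some

lemma mem_lineThru {Q x : P} (h : x ≠ Q) :
    x ∈ (lineThru Q x : L) ∧ Q ∈ (lineThru Q x : L) := by
  rw [lineThru, dif_pos h]
  exact Configuration.HasLines.mkLine_ax h

variable [Fintype P] [Fintype L]

lemma card_badAt_le (Q : P) (n : ℕ) :
    (univ.filter fun K : Finset P => K.card = n ∧ BadAt L Q K).card ≤
      (order P L + 1).choose n * order P L ^ n := by
  classical
  set q := order P L with hq
  set LQ : Finset L := univ.filter fun ℓ => Q ∈ ℓ with hLQdef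
  set Pts : L → Finset P := fun ℓ => univ.filter fun x => x ∈ ℓ ∧ x ≠ Q with hPtsdef
  have hLQcard : LQ.card = q + 1 := by
    have h1 : lineCount L Q = LQ.card := by
      rw [lineCount, Nat.card_eq_fintype_card, Fintype.card_subtype]
    rw [← h1, lineCount_eq]
  have hPtscard : ∀ ℓ : L, Q ∈ ℓ → (Pts ℓ).card = q := by
    intro ℓ hQℓ
    have h1 : Pts ℓ = (univ.filter fun x : P => x ∈ ℓ).erase Q := by
      ext x
      simp only [hPtsdef, mem_filter, mem_univ, true_and, mem_erase]
      tauto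
    have h2 : (univ.filter fun x : P => x ∈ ℓ).card = q + 1 := by
      have h3 := pointCount_eq P ℓ
      rwa [pointCount, Nat.card_eq_fintype_card, Fintype.card_subtype] at h3
    rw [h1, card_erase_of_mem (by simp [hQℓ]), h2]
    omega
  set T := (LQ.powersetCard n).sigma (fun s => s.pi fun ℓ => Pts ℓ) with hT
  set F : Finset P → (Σ s : Finset L, ∀ ℓ ∈ s, P) := fun K =>
    ⟨K.image (lineThru Q), fun ℓ _ =>
      if hex : ∃ x, x ∈ K ∧ x ∈ ℓ ∧ x ≠ Q then hex.choose else Q⟩ with hF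
  have hWitness : ∀ K : Finset P, Q ∉ K → ∀ ℓ ∈ K.image (lineThru Q (L := L)),
      ∃ x, x ∈ K ∧ x ∈ ℓ ∧ x ≠ Q := by
    intro K hQK ℓ hℓ
    obtain ⟨x, hxK, hx⟩ := mem_image.mp hℓ
    have hxQ : x ≠ Q := fun h => hQK (h ▸ hxK)
    exact ⟨x, hxK, hx ▸ (mem_lineThru hxQ).1, hxQ⟩
  have hQline : ∀ K : Finset P, Q ∉ K → ∀ ℓ ∈ K.image (lineThru Q (L := L)), Q ∈ ℓ := by
    intro K hQK ℓ hℓ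
    obtain ⟨x, hxK, hx⟩ := mem_image.mp hℓ
    have hxQ : x ≠ Q := fun h => hQK (h ▸ hxK)
    exact hx ▸ (mem_lineThru hxQ).2
  have hsnd : ∀ (K : Finset P) (ℓ : L) (hℓ : ℓ ∈ (F K).1)
      (hex : ∃ x ∈ K, x ∈ ℓ ∧ x ≠ Q), (F K).2 ℓ hℓ = hex.choose := by
    intro K ℓ hℓ hex
    show (if hex' : ∃ x ∈ K, x ∈ ℓ ∧ x ≠ Q then hex'.choose else Q) = hex.choose
    rw [dif_pos hex]
  have hmem : ∀ K ∈ univ.filter (fun K : Finset P => K.card = n ∧ BadAt L Q K), F K ∈ T := by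
    intro K hK
    rw [mem_filter] at hK
    obtain ⟨-, hcard, hbad⟩ := hK
    rw [hT, hF]
    refine mem_sigma.mpr ⟨?_, ?_⟩
    · refine mem_powersetCard.mpr ⟨?_, ?_⟩
      · intro ℓ hℓ
        simp only [hLQdef, mem_filter, mem_univ, true_and]
        exact hQline K hbad.1 ℓ hℓ
      · rw [card_image_of_injOn, hcard]
        intro x hx y hy hxy
        by_contra hne
        have hxQ : x ≠ Q := fun h => hbad.1 (h ▸ hx)
        have hyQ : y ≠ Q := fun h => hbad.1 (h ▸ hy)
        exact hbad.2 x hx y hy hne (lineThru Q x)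
          ⟨(mem_lineThru hxQ).2, (mem_lineThru hxQ).1, hxy ▸ (mem_lineThru hyQ).1⟩
    · refine mem_pi.mpr ?_
      intro ℓ hℓ
      have hex := hWitness K hbad.1 ℓ hℓ
      simp only [dif_pos hex]
      obtain ⟨hxK, hxl, hxQ⟩ := hex.choose_spec
      simp only [hPtsdef, mem_filter, mem_univ, true_and]
      exact ⟨hxl, hxQ⟩
  have hrec : ∀ K : Finset P, BadAt L Q K → ∀ x : P,
      x ∈ K ↔ ∃ ℓ, ∃ hℓ : ℓ ∈ (F K).1, (F K).2 ℓ hℓ = x := by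
    intro K hbad x
    constructor
    · intro hxK
      have hxQ : x ≠ Q := fun h => hbad.1 (h ▸ hxK)
      have hℓ : (lineThru Q x : L) ∈ (F K).1 := by
        rw [hF]; exact mem_image_of_mem _ hxK
      refine ⟨lineThru Q x, hℓ, ?_⟩
      have hex := hWitness K hbad.1 _ (by rw [hF] at hℓ; exact hℓ)
      rw [hsnd K _ hℓ hex]
      obtain ⟨hyK, hyl, hyQ⟩ := hex.choose_spec
      by_contra hne
      exact hbad.2 _ hyK _ hxK hne (lineThru Q x)
        ⟨(mem_lineThru hxQ).2, hyl, (mem_lineThru hxQ).1⟩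
    · rintro ⟨ℓ, hℓ, rfl⟩
      have hℓ' : ℓ ∈ K.image (lineThru Q (L := L)) := by rw [hF] at hℓ; exact hℓ
      have hex := hWitness K hbad.1 ℓ hℓ'
      rw [hsnd K ℓ hℓ hex]
      exact hex.choose_spec.1
  have hinj : Set.InjOn F (univ.filter fun K : Finset P => K.card = n ∧ BadAt L Q K) := by
    intro K hK K' hK' hFF
    simp only [coe_filter, Set.mem_setOf_eq, mem_univ, true_and] at hK hK'
    ext x
    rw [hrec K hK.2 x, hrec K' hK'.2 x, hFF]
  calc (univ.filter fun K : Finset P => K.card = n ∧ BadAt L Q K).card ≤ T.card :=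
        card_le_card_of_injOn F hmem hinj
    _ = (q + 1).choose n * q ^ n := by
        rw [hT, card_sigma]
        have hs : ∀ s ∈ LQ.powersetCard n, (s.pi fun ℓ => Pts ℓ).card = q ^ n := by
          intro s hs
          obtain ⟨hsub, hscard⟩ := mem_powersetCard.mp hs
          rw [Finset.card_pi,
            Finset.prod_congr rfl fun ℓ hℓ => hPtscard ℓ (by
              have := hsub hℓ
              simp only [hLQdef, mem_filter, mem_univ, true_and] at this
              exact this),
            prod_const, hscard]
        rw [Finset.sum_congr rfl hs, sum_const, card_powersetCard, hLQcard, smul_eq_mul]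

lemma real_bound (q w : ℕ) (hq : 2 ≤ q) (hwq : w + 2 ≤ q) :
    ((q:ℝ)^2 + q + 1) * (((q+1).choose (w+1) : ℕ) : ℝ) * (q:ℝ)^(w+1) <
      ((q:ℝ) + 1) ^ 2 * Real.exp (-(w : ℝ) ^ 2 / (2 * q + 2)) *
        (((q ^ 2 + q + 1).choose (w + 1) : ℕ) : ℝ) := by
  have hqR : (2:ℝ) ≤ q := by exact_mod_cast hq
  have hwqR : (w:ℝ) + 2 ≤ q := by exact_mod_cast hwq
  set n := w + 1 with hn
  have hnq : n ≤ q + 1 := by omega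
  have hnN : n ≤ q ^ 2 + q + 1 := by nlinarith
  have hq2 : (0:ℝ) < (q:ℝ) + 2 := by linarith
  have hiw : ∀ i ∈ range n, (i:ℝ) ≤ w := by
    intro i hi
    have : i ≤ w := by rw [mem_range] at hi; omega
    exact_mod_cast this
  have hpt : ∀ i ∈ range n,
      ((q:ℝ) + 1 - (i:ℝ)) * q ≤ Real.exp (-(i:ℝ)/((q:ℝ)+2)) * ((q:ℝ)^2 + q + 1 - i) := by
    intro i hi
    have hiw' := hiw i hi
    have h1 : 1 - (i:ℝ)/((q:ℝ)+2) ≤ Real.exp (-(i:ℝ)/((q:ℝ)+2)) := by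
      have h0 := Real.add_one_le_exp (-(i:ℝ)/((q:ℝ)+2))
      rw [neg_div] at h0 ⊢
      linarith
    have hN : (0:ℝ) ≤ (q:ℝ)^2 + q + 1 - i := by nlinarith
    have h2 : ((q:ℝ) + 1 - i) * q ≤ (1 - (i:ℝ)/((q:ℝ)+2)) * ((q:ℝ)^2 + q + 1 - i) := by
      rw [show (1 - (i:ℝ)/((q:ℝ)+2)) = ((q:ℝ)+2-i)/((q:ℝ)+2) by field_simp,
        div_mul_eq_mul_div, le_div_iff₀ hq2]
      nlinarith [sq_nonneg ((i:ℝ) - 3/2)]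
    calc ((q:ℝ) + 1 - i) * q ≤ _ := h2
      _ ≤ _ := mul_le_mul_of_nonneg_right h1 hN
  have hprod : ∏ i ∈ range n, (((q:ℝ) + 1 - i) * q) ≤
      ∏ i ∈ range n, (Real.exp (-(i:ℝ)/((q:ℝ)+2)) * ((q:ℝ)^2 + q + 1 - i)) := by
    refine prod_le_prod (fun i hi => ?_) hpt
    have := hiw i hi
    have h0 : (0:ℝ) ≤ (q:ℝ) + 1 - i := by linarith
    have h0' : (0:ℝ) ≤ (q:ℝ) := by linarith
    exact mul_nonneg h0 h0'
  have hcast : ∀ m : ℕ, n ≤ m → ((m.descFactorial n : ℕ):ℝ) = ∏ i ∈ range n, ((m:ℝ) - i) := by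
    intro m hm
    rw [Nat.descFactorial_eq_prod_range, Nat.cast_prod]
    refine prod_congr rfl fun i hi => ?_
    rw [Nat.cast_sub (le_trans (le_of_lt (mem_range.mp hi)) hm)]
  have hd1 : (((q+1).descFactorial n : ℕ):ℝ) = ∏ i ∈ range n, ((q:ℝ) + 1 - i) := by
    rw [hcast _ hnq]
    exact prod_congr rfl fun i _ => by push_cast; ring
  have hd2 : (((q^2+q+1).descFactorial n : ℕ):ℝ) = ∏ i ∈ range n, ((q:ℝ)^2 + q + 1 - i) := by
    rw [hcast _ hnN]
    exact prod_congr rfl fun i _ => by push_cast; ring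
  have hsumR : ∑ i ∈ range n, (i:ℝ) = (w:ℝ) * (w+1) / 2 := by
    have h3 : (∑ i ∈ range n, i) * 2 = (w+1) * w := by
      simpa [hn] using Finset.sum_range_id_mul_two n
    have h4 := congrArg (Nat.cast : ℕ → ℝ) h3
    push_cast at h4
    linarith
  have hexp : ∏ i ∈ range n, Real.exp (-(i:ℝ)/((q:ℝ)+2)) =
      Real.exp (-((w:ℝ) * (w+1) / 2)/((q:ℝ)+2)) := by
    rw [← Real.exp_sum]
    congr 1
    rw [show (∑ i ∈ range n, -(i:ℝ)/((q:ℝ)+2)) = (∑ i ∈ range n, -(i:ℝ))/((q:ℝ)+2) from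
      (Finset.sum_div _ _ _).symm]
    rw [Finset.sum_neg_distrib, hsumR]
  have hexple : Real.exp (-((w:ℝ) * (w+1) / 2)/((q:ℝ)+2)) ≤
      Real.exp (-(w:ℝ)^2 / (2 * (q:ℝ) + 2)) := by
    rw [Real.exp_le_exp]
    have hw0 : (0:ℝ) ≤ w := by positivity
    have h1 : (w:ℝ)^2 / (2 * (q:ℝ) + 2) ≤ (w:ℝ) * (w+1) / 2 / ((q:ℝ)+2) := by
      rw [div_div, div_le_div_iff₀ (by linarith) (by linarith)]
      nlinarith
    rw [neg_div, neg_div]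
    exact neg_le_neg h1
  have hdp : (0:ℝ) ≤ ∏ i ∈ range n, ((q:ℝ)^2 + q + 1 - i) := by
    refine prod_nonneg fun i hi => ?_
    have := hiw i hi
    nlinarith
  have key2 : (((q+1).descFactorial n : ℕ):ℝ) * (q:ℝ)^n ≤
      Real.exp (-(w:ℝ)^2 / (2 * (q:ℝ) + 2)) * (((q^2+q+1).descFactorial n : ℕ):ℝ) := by
    calc (((q+1).descFactorial n : ℕ):ℝ) * (q:ℝ)^n
        = ∏ i ∈ range n, (((q:ℝ) + 1 - i) * (q:ℝ)) := by
          rw [hd1, prod_mul_distrib, prod_const, card_range]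
      _ ≤ ∏ i ∈ range n, (Real.exp (-(i:ℝ)/((q:ℝ)+2)) * ((q:ℝ)^2 + q + 1 - i)) := hprod
      _ = (∏ i ∈ range n, Real.exp (-(i:ℝ)/((q:ℝ)+2))) *
            ∏ i ∈ range n, ((q:ℝ)^2 + q + 1 - i) := prod_mul_distrib
      _ = Real.exp (-((w:ℝ) * (w+1) / 2)/((q:ℝ)+2)) *
            ∏ i ∈ range n, ((q:ℝ)^2 + q + 1 - i) := by rw [hexp]
      _ ≤ Real.exp (-(w:ℝ)^2 / (2 * (q:ℝ) + 2)) *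
            ∏ i ∈ range n, ((q:ℝ)^2 + q + 1 - i) := mul_le_mul_of_nonneg_right hexple hdp
      _ = _ := by rw [hd2]
  have hkey : (((q+1).choose n : ℕ):ℝ) * (q:ℝ)^n ≤
      Real.exp (-(w:ℝ)^2 / (2 * (q:ℝ) + 2)) * (((q^2+q+1).choose n : ℕ):ℝ) := by
    have hf : (0:ℝ) < (n.factorial : ℝ) := by exact_mod_cast n.factorial_pos
    rw [Nat.descFactorial_eq_factorial_mul_choose, Nat.descFactorial_eq_factorial_mul_choose]
      at key2
    push_cast at key2
    refine le_of_mul_le_mul_left ?_ hf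
    have e1 : (n.factorial : ℝ) * ((((q+1).choose n : ℕ):ℝ) * (q:ℝ)^n)
        = (n.factorial : ℝ) * (((q+1).choose n : ℕ):ℝ) * (q:ℝ)^n := by ring
    have e2 : Real.exp (-(w:ℝ)^2 / (2 * (q:ℝ) + 2)) *
          ((n.factorial : ℝ) * (((q^2+q+1).choose n : ℕ):ℝ))
        = (n.factorial : ℝ) *
          (Real.exp (-(w:ℝ)^2 / (2 * (q:ℝ) + 2)) * (((q^2+q+1).choose n : ℕ):ℝ)) := by ring
    rw [e1, ← e2]
    linarith [key2]
  have hc2pos : (0:ℝ) < (((q^2+q+1).choose n : ℕ):ℝ) := by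
    exact_mod_cast Nat.choose_pos hnN
  have hNlt : ((q:ℝ)^2 + q + 1) < ((q:ℝ) + 1)^2 := by nlinarith
  have hN0 : (0:ℝ) ≤ (q:ℝ)^2 + q + 1 := by positivity
  have hexppos : (0:ℝ) < Real.exp (-(w:ℝ)^2 / (2 * (q:ℝ) + 2)) * (((q^2+q+1).choose n : ℕ):ℝ) :=
    mul_pos (Real.exp_pos _) hc2pos
  have step1 : ((q:ℝ)^2+q+1) * ((((q+1).choose n : ℕ):ℝ) * (q:ℝ)^n) ≤
      ((q:ℝ)^2+q+1) * (Real.exp (-(w:ℝ)^2 / (2 * (q:ℝ) + 2)) * (((q^2+q+1).choose n : ℕ):ℝ)) :=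
    mul_le_mul_of_nonneg_left hkey hN0
  have step2 : ((q:ℝ)^2+q+1) * (Real.exp (-(w:ℝ)^2 / (2 * (q:ℝ) + 2)) *
        (((q^2+q+1).choose n : ℕ):ℝ)) <
      ((q:ℝ)+1)^2 * (Real.exp (-(w:ℝ)^2 / (2 * (q:ℝ) + 2)) * (((q^2+q+1).choose n : ℕ):ℝ)) :=
    mul_lt_mul_of_pos_right hNlt hexppos
  have := lt_of_le_of_lt step1 step2
  linarith [this]

lemma exists_badAt {P L : Type*} [Membership P L] {K : Finset P}
    (h : ¬ IsSaturating L (↑K : Set P)) : ∃ Q : P, BadAt L Q K := by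
  unfold IsSaturating at h
  push_neg at h
  obtain ⟨Q, hQ1, hQ2⟩ := h
  refine ⟨Q, fun hQK => hQ1 (Finset.mem_coe.mpr hQK), ?_⟩
  rintro x hx y hy hxy ℓ ⟨h1, h2, h3⟩
  exact hQ2 x (Finset.mem_coe.mpr hx) y (Finset.mem_coe.mpr hy) hxy ℓ h1 h2 h3

lemma card_nonsat_le {P L : Type*} [Membership P L] [Configuration.ProjectivePlane P L]
    [Fintype P] [Fintype L] (n : ℕ) :
    Nat.card {K : Finset P // K.card = n ∧ ¬ IsSaturating L (↑K : Set P)} ≤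
      Fintype.card P * ((order P L + 1).choose n * order P L ^ n) := by
  classical
  rw [Nat.card_eq_fintype_card, Fintype.card_subtype]
  have hsub : (univ.filter fun K : Finset P => K.card = n ∧ ¬ IsSaturating L (↑K : Set P)) ⊆
      univ.biUnion fun Q : P =>
        univ.filter fun K : Finset P => K.card = n ∧ BadAt L Q K := by
    intro K hK
    rw [mem_filter] at hK
    obtain ⟨-, hcard, hns⟩ := hK
    obtain ⟨Q, hQ⟩ := exists_badAt hns
    exact mem_biUnion.mpr ⟨Q, mem_univ Q, mem_filter.mpr ⟨mem_univ K, hcard, hQ⟩⟩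
  calc (univ.filter fun K : Finset P => K.card = n ∧ ¬ IsSaturating L (↑K : Set P)).card
      ≤ (univ.biUnion fun Q : P =>
          univ.filter fun K : Finset P => K.card = n ∧ BadAt L Q K).card := card_le_card hsub
    _ ≤ ∑ Q : P, (univ.filter fun K : Finset P => K.card = n ∧ BadAt L Q K).card :=
        card_biUnion_le
    _ ≤ ∑ _Q : P, (order P L + 1).choose n * order P L ^ n :=
        sum_le_sum fun Q _ => card_badAt_le Q n
    _ = Fintype.card P * ((order P L + 1).choose n * order P L ^ n) := by
        rw [sum_const, card_univ, smul_eq_mul]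

end SatAux

theorem card_non_saturating_subsets_bound (q w : ℕ) (hq : 2 ≤ q) (hw : 1 ≤ w)
    (hwq : (w : ℝ) < ((q : ℝ) ^ 2 - 1) / ((q : ℝ) + 2))
    (P L : Type*) [Fintype P] [Fintype L] [Membership P L]
    [Configuration.ProjectivePlane P L]
    (horder : Configuration.ProjectivePlane.order P L = q) :
    (Nat.card {K : Finset P // K.card = w + 1 ∧ ¬ IsSaturating L (↑K : Set P)} : ℝ) <
      ((q : ℝ) + 1) ^ 2 * Real.exp (-(w : ℝ) ^ 2 / (2 * q + 2)) *
        (((q ^ 2 + q + 1).choose (w + 1) : ℕ) : ℝ) := by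
  have hqR : (2:ℝ) ≤ q := by exact_mod_cast hq
  have hwq2 : w + 2 ≤ q := by
    have hq2 : (0:ℝ) < (q:ℝ) + 2 := by linarith
    have hlt : ((q:ℝ)^2 - 1) / ((q:ℝ) + 2) < (q:ℝ) - 1 := by
      rw [div_lt_iff₀ hq2]
      nlinarith
    have h1 : (w:ℝ) < (q:ℝ) - 1 := lt_trans hwq hlt
    have h2 : ((w + 1 : ℕ) : ℝ) < (q : ℕ) := by push_cast; linarith
    have h3 : w + 1 < q := by exact_mod_cast h2
    omega
  have hcardP : Fintype.card P = q ^ 2 + q + 1 := by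
    rw [← horder]
    exact Configuration.ProjectivePlane.card_points P L
  have hA := SatAux.card_nonsat_le (P := P) (L := L) (w + 1)
  rw [horder, hcardP] at hA
  have hB := SatAux.real_bound q w hq hwq2
  have hle : (Nat.card {K : Finset P // K.card = w + 1 ∧ ¬ IsSaturating L (↑K : Set P)} : ℝ)
      ≤ ((q:ℝ)^2 + q + 1) * (((q+1).choose (w+1) : ℕ) : ℝ) * (q:ℝ)^(w+1) := by
    calc (Nat.card {K : Finset P // K.card = w + 1 ∧ ¬ IsSaturating L (↑K : Set P)} : ℝ)
        ≤ (((q ^ 2 + q + 1) * ((q + 1).choose (w + 1) * q ^ (w + 1)) : ℕ) : ℝ) := by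
          exact_mod_cast hA
      _ = ((q:ℝ)^2 + q + 1) * (((q+1).choose (w+1) : ℕ) : ℝ) * (q:ℝ)^(w+1) := by
          push_cast; ring
  linarith [hle, hB]
end

section
/- Let q ≥ 2 be an integer, let Π be a finite projective plane of order q, and set δ = 1/√((q+1)·ln(q+1)). Define a sequence of reals by D_1 = 1 and D_i = D_{i−1} + 1 + (D_{i−1} + δ)/q + δ for i ≥ 2. Then for every integer μ ≥ 2, Π contains a (1, μ)-saturating set of size at most 2·D_μ·√((q+1)·ln(q+1)) + 2. -/
open scoped Classical in
/-- The number of secants of a point set `S` through a point `Q`, counted with multiplicity: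
the multiplicity of a line `ℓ` is `C(#(ℓ ∩ S), 2)`. -/
noncomputable def secantCount (L : Type*) {P : Type*} [Membership P L] [Fintype L]
    (S : Set P) (Q : P) : ℕ :=
  ∑ ℓ : L, if Q ∈ ℓ then ({p ∈ S | p ∈ ℓ}.ncard).choose 2 else 0

/-- A point set `S` in a projective plane (with line type `L`) is *(1,μ)-saturating* if for
every point `Q` not in `S` the number of secants of `S` through `Q`, counted with
multiplicity, is at least `μ`. -/
def IsMuSaturating (L : Type*) {P : Type*} [Membership P L] [Fintype L]
    (S : Set P) (μ : ℕ) : Prop :=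
  ∀ Q : P, Q ∉ S → μ ≤ secantCount L S Q

namespace MuSatAux
set_option maxHeartbeats 1000000

lemma log5 : (1.6 : ℝ) < Real.log 5 := by
  have h1 : Real.exp 1.6 < 5 := by
    have h8 : Real.exp 1.6 ^ (5 : ℕ) = Real.exp 8 := by
      rw [← Real.exp_nat_mul]; norm_num
    have he : Real.exp 8 = Real.exp 1 ^ (8 : ℕ) := by
      rw [← Real.exp_nat_mul]; norm_num
    have hlt : Real.exp 1 ^ (8 : ℕ) < 2.7182818286 ^ (8 : ℕ) := by
      apply pow_lt_pow_left₀ Real.exp_one_lt_d9 (Real.exp_pos 1).le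
      norm_num
    have hnum : (2.7182818286 : ℝ) ^ (8 : ℕ) < 3125 := by norm_num
    have h5 : Real.exp 1.6 ^ (5 : ℕ) < 5 ^ (5 : ℕ) := by
      rw [h8, he]
      calc Real.exp 1 ^ (8:ℕ) < 2.7182818286 ^ (8:ℕ) := hlt
        _ < 3125 := hnum
        _ = 5 ^ (5:ℕ) := by norm_num
    exact lt_of_pow_lt_pow_left₀ 5 (by norm_num) h5
  calc (1.6 : ℝ) = Real.log (Real.exp 1.6) := (Real.log_exp 1.6).symm
    _ < Real.log 5 := Real.log_lt_log (Real.exp_pos _) h1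

lemma log_le_half {t : ℝ} (ht : 0 < t) : Real.log t ≤ t / 2 := by
  have hs := Real.sqrt_pos.mpr ht
  have h1 : Real.log t = 2 * Real.log (Real.sqrt t) := by
    rw [Real.log_sqrt ht.le]; ring
  have h2 : Real.log (Real.sqrt t) ≤ Real.sqrt t - 1 :=
    Real.log_le_sub_one_of_pos hs
  have h3 : Real.sqrt t ^ 2 = t := Real.sq_sqrt ht.le
  nlinarith [sq_nonneg (Real.sqrt t - 2)]

lemma gauss (T : ℕ) : ∑ v ∈ Finset.range T, (v : ℝ) = T * (T - 1) / 2 := by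
  induction T with
  | zero => simp
  | succ k ih =>
    rw [Finset.sum_range_succ, ih]
    push_cast
    ring

lemma rhs_mono (q E A Lr : ℝ) (hq : 1 ≤ q) (hE : 0 ≤ E) (hA : 0 ≤ A) (hL : A ≤ Lr) :
    (q - 1) * A * (A + 1) / 2 + E * (A + 1) ≤ (q - 1) * Lr * (Lr + 1) / 2 + E * (Lr + 1) := by
  nlinarith [mul_nonneg (mul_nonneg (by linarith : (0:ℝ) ≤ q - 1) (by linarith : (0:ℝ) ≤ Lr - A))
    (by linarith : (0:ℝ) ≤ Lr + A + 1), mul_nonneg hE (by linarith : (0:ℝ) ≤ Lr - A)]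

lemma case_mu2 (q x s : ℝ) (hq : 4 ≤ q) (hx : 1.6 ≤ x)
    (hs0 : 0 ≤ s) (hs2 : s ^ 2 = (q + 1) * x) (hs28 : 2.8 ≤ s)
    (hlog2 : Real.log 2 ≤ 0.694) :
    (2:ℝ) * (q ^ 2 + q + 1) * (Real.log 2 + 2 * x) ≤
      (q - 1) * (2 * 2 * s - 2) * ((2 * 2 * s - 2) + 1) / 2 +
        (2 * (q - 2) + q + 1) * ((2 * 2 * s - 2) + 1) := by
  have hN14 : q ^ 2 + q + 1 ≤ 1.4 * (q ^ 2 - 1) := by nlinarith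
  have hp1 : (0:ℝ) ≤ Real.log 2 + 2 * x := by
    have := Real.log_nonneg (by norm_num : (1:ℝ) ≤ 2)
    linarith
  have hlhs : (2:ℝ) * (q ^ 2 + q + 1) * (Real.log 2 + 2 * x) ≤
      2.8 * (q ^ 2 - 1) * (0.694 + 2 * x) := by
    nlinarith [mul_le_mul hN14 (by linarith : Real.log 2 + 2*x ≤ 0.694 + 2*x) hp1
      (by nlinarith : (0:ℝ) ≤ 1.4 * (q ^ 2 - 1))]
  have hid : (q - 1) * (2 * 2 * s - 2) * ((2 * 2 * s - 2) + 1) / 2 +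
        (2 * (q - 2) + q + 1) * ((2 * 2 * s - 2) + 1)
      = (q - 1) * (8 * s ^ 2 + 6 * s - 2) := by ring
  rw [hid]
  have hkey : 2.8 * (q + 1) * (0.694 + 2 * x) ≤ 8 * s ^ 2 + 6 * s - 2 := by
    rw [hs2]
    nlinarith
  have hrhs : 2.8 * (q ^ 2 - 1) * (0.694 + 2 * x) ≤ (q - 1) * (8 * s ^ 2 + 6 * s - 2) := by
    have hq1 : (0:ℝ) ≤ q - 1 := by linarith
    nlinarith [mul_le_mul_of_nonneg_left hkey hq1]
  linarith

lemma case_mu3 (q μ x s : ℝ) (hq : 4 ≤ q) (hμ : 3 ≤ μ) (hx : 1.6 ≤ x)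
    (hs0 : 0 ≤ s) (hs2 : s ^ 2 = (q + 1) * x) (hs28 : 2.8 ≤ s)
    (hlogμ : Real.log μ ≤ μ - 1) :
    μ * (q ^ 2 + q + 1) * (Real.log μ + 2 * x) ≤
      (q - 1) * (2 * μ * s - 2) * ((2 * μ * s - 2) + 1) / 2 +
        (μ * (q - 2) + q + 1) * ((2 * μ * s - 2) + 1) := by
  have hN14 : q ^ 2 + q + 1 ≤ 1.4 * (q ^ 2 - 1) := by nlinarith
  have hp1 : (0:ℝ) ≤ Real.log μ + 2 * x := by
    have := Real.log_nonneg (by linarith : (1:ℝ) ≤ μ)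
    linarith
  have hlhs : μ * (q ^ 2 + q + 1) * (Real.log μ + 2 * x) ≤
      1.4 * μ * (q ^ 2 - 1) * ((μ - 1) + 2 * x) := by
    have h1 := mul_le_mul hN14 (by linarith : Real.log μ + 2*x ≤ (μ - 1) + 2*x) hp1
      (by nlinarith : (0:ℝ) ≤ 1.4 * (q ^ 2 - 1))
    nlinarith [mul_le_mul_of_nonneg_left h1 (by linarith : (0:ℝ) ≤ μ)]
  refine le_trans hlhs ?_
  have hid : (q - 1) * (2 * μ * s - 2) * ((2 * μ * s - 2) + 1) / 2 +
        (μ * (q - 2) + q + 1) * ((2 * μ * s - 2) + 1)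
      = 2 * μ ^ 2 * s ^ 2 * (q - 1) + (q - 1) - μ * (q - 2) - (q + 1)
        + μ * s * (2 * μ * (q - 2) - (q - 5)) := by ring
  rw [hid, hs2]
  have hsur : (0:ℝ) ≤ μ * s * (2 * μ * (q - 2) - (q - 5)) := by
    have h1 : (0:ℝ) ≤ 2 * μ * (q - 2) - (q - 5) := by nlinarith
    have hms : (0:ℝ) ≤ μ * s := by positivity
    exact mul_nonneg hms h1
  have e2 : 0.6 * μ ≤ (2 * μ - 2.8) * x - 1.4 * (μ - 1) := by nlinarith
  have e3 : μ * (q ^ 2 - 1) * (0.6 * μ) ≤ μ * (q ^ 2 - 1) * ((2 * μ - 2.8) * x - 1.4 * (μ - 1)) := by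
    have h0 : (0:ℝ) ≤ μ * (q ^ 2 - 1) := by nlinarith
    exact mul_le_mul_of_nonneg_left e2 h0
  have e4 : 1.8 * μ * (q ^ 2 - 1) ≤ μ * (q ^ 2 - 1) * (0.6 * μ) := by
    nlinarith [mul_nonneg (mul_nonneg (by linarith : (0:ℝ) ≤ μ) (by nlinarith : (0:ℝ) ≤ q ^ 2 - 1))
      (by linarith : (0:ℝ) ≤ 0.6 * μ - 1.8)]
  nlinarith [hsur, e3, e4]

lemma mainIneq (q μ x s Lr : ℝ) (hq : 4 ≤ q) (hμ : 2 ≤ μ) (hx : 1.6 ≤ x)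
    (hs0 : 0 ≤ s) (hs2 : s ^ 2 = (q + 1) * x)
    (hL : 2 * μ * s - 2 ≤ Lr)
    (hlogμ : Real.log μ ≤ μ - 1)
    (hsplit : μ = 2 ∨ 3 ≤ μ)
    (hlog2 : Real.log 2 ≤ 0.694) :
    μ * (q ^ 2 + q + 1) * (Real.log μ + 2 * x) ≤
      (q - 1) * Lr * (Lr + 1) / 2 + (μ * (q - 2) + q + 1) * (Lr + 1) := by
  have hs28 : 2.8 ≤ s := by nlinarith
  have hA0 : (0:ℝ) ≤ 2 * μ * s - 2 := by nlinarith
  have hE0 : (0:ℝ) ≤ μ * (q - 2) + q + 1 := by nlinarith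
  have hmono := rhs_mono q (μ * (q - 2) + q + 1) (2 * μ * s - 2) Lr (by linarith) hE0 hA0 hL
  refine le_trans ?_ hmono
  rcases hsplit with h2 | h3
  · subst h2
    exact case_mu2 q x s hq hx hs0 hs2 hs28 hlog2
  · exact case_mu3 q μ x s hq h3 hx hs0 hs2 hs28 hlogμ


lemma sum_sched (qn μ K : ℕ) (hq : 2 ≤ qn) (hμ : 1 ≤ μ) (hK : 2*μ ≤ K) :
    ((qn:ℝ) - 1) * ((K - 2*μ : ℕ):ℝ) * (((K - 2*μ:ℕ):ℝ) + 1) / 2 +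
      ((μ:ℝ) * ((qn:ℝ) - 2) + (qn:ℝ) + 1) * (((K - 2*μ:ℕ):ℝ) + 1)
    ≤ ∑ i ∈ Finset.Icc 1 K, max (((i:ℝ) - (μ:ℝ) + 1) * (qn:ℝ) + 1 - (i:ℝ)) 0 := by
  have hsub : ∑ i ∈ Finset.Icc (2*μ) K, max (((i:ℝ) - (μ:ℝ) + 1) * (qn:ℝ) + 1 - (i:ℝ)) 0 ≤
      ∑ i ∈ Finset.Icc 1 K, max (((i:ℝ) - (μ:ℝ) + 1) * (qn:ℝ) + 1 - (i:ℝ)) 0 :=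
    Finset.sum_le_sum_of_subset_of_nonneg
      (Finset.Icc_subset_Icc (by omega) le_rfl) (fun i _ _ => le_max_right _ 0)
  refine le_trans ?_ hsub
  rw [← Finset.Ico_add_one_right_eq_Icc, Finset.sum_Ico_eq_sum_range]
  set T : ℕ := K + 1 - 2*μ with hT
  have hTr : (T:ℝ) = ((K - 2*μ:ℕ):ℝ) + 1 := by
    rw [hT]
    have e1 : K + 1 - 2*μ = (K - 2*μ) + 1 := by omega
    rw [e1]
    push_cast
    ring
  have hterm : ∀ v ∈ Finset.range T,
      ((qn:ℝ) - 1) * (v:ℝ) + ((μ:ℝ) * ((qn:ℝ) - 2) + (qn:ℝ) + 1) ≤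
      max ((((2*μ + v : ℕ):ℝ) - (μ:ℝ) + 1) * (qn:ℝ) + 1 - ((2*μ + v:ℕ):ℝ)) 0 := by
    intro v _
    refine le_trans (le_of_eq ?_) (le_max_left _ 0)
    push_cast
    ring
  calc ((qn:ℝ) - 1) * ((K - 2*μ : ℕ):ℝ) * (((K - 2*μ:ℕ):ℝ) + 1) / 2 +
        ((μ:ℝ) * ((qn:ℝ) - 2) + (qn:ℝ) + 1) * (((K - 2*μ:ℕ):ℝ) + 1)
      = ∑ v ∈ Finset.range T, (((qn:ℝ) - 1) * (v:ℝ) + ((μ:ℝ) * ((qn:ℝ) - 2) + (qn:ℝ) + 1)) := by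
        rw [Finset.sum_add_distrib, ← Finset.mul_sum, gauss, Finset.sum_const,
          Finset.card_range, nsmul_eq_mul, hTr]
        ring
    _ ≤ ∑ v ∈ Finset.range T,
          max ((((2*μ + v : ℕ):ℝ) - (μ:ℝ) + 1) * (qn:ℝ) + 1 - ((2*μ + v:ℕ):ℝ)) 0 :=
        Finset.sum_le_sum hterm

lemma D_ge (q : ℕ) (hq : 1 ≤ q) (δ : ℝ) (hδ0 : 0 ≤ δ) (D : ℕ → ℝ) (hD1 : D 1 = 1)
    (hDi : ∀ i : ℕ, 2 ≤ i → D i = D (i - 1) + 1 + (D (i - 1) + δ) / q + δ) :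
    ∀ μ : ℕ, 1 ≤ μ → 1 + ((μ:ℝ) - 1) * (1 + δ) ≤ D μ := by
  intro μ hμ1
  induction μ with
  | zero => omega
  | succ m ih =>
    by_cases hm : m = 0
    · subst hm
      simp [hD1]
    · have hm1 : 1 ≤ m := by omega
      have ihm := ih hm1
      have hrec := hDi (m+1) (by omega)
      rw [Nat.add_sub_cancel] at hrec
      have hq0 : (0:ℝ) < (q:ℝ) := by exact_mod_cast hq
      have hmc : (1:ℝ) ≤ (m:ℝ) := by exact_mod_cast hm1
      have hDm : (1:ℝ) ≤ D m := by nlinarith [ihm]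
      have hdiv : (0:ℝ) ≤ (D m + δ) / (q:ℝ) := div_nonneg (by linarith) hq0.le
      rw [hrec]
      push_cast
      nlinarith [ihm, hdiv]

end MuSatAux

namespace MuSat
set_option linter.unusedSectionVars false

open Finset
open scoped Classical

variable {P L : Type*} [Fintype P] [Fintype L] [Membership P L]
  [Configuration.ProjectivePlane P L]

/-- number of points of `S` on the line `ℓ` -/
noncomputable def nsec (S : Finset P) (ℓ : L) : ℕ := (S.filter (· ∈ ℓ)).card

variable (L) in
/-- secant count as a finset sum -/
noncomputable def fc (S : Finset P) (Q : P) : ℕ :=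
  ∑ ℓ : L, if Q ∈ ℓ then (nsec S ℓ).choose 2 else 0

variable (L) in
/-- deficiency of a point -/
noncomputable def dq (μ : ℕ) (S : Finset P) (Q : P) : ℕ := μ - min (fc L S Q) μ

variable (L) in
/-- total deficiency potential -/
noncomputable def Phi (μ : ℕ) (S : Finset P) : ℕ := ∑ Q ∈ univ \ S, dq L μ S Q

variable (L) in
/-- lines through `Q` meeting `S` -/
noncomputable def Ml (S : Finset P) (Q : P) : Finset L :=
  univ.filter (fun ℓ => Q ∈ ℓ ∧ ∃ a ∈ S, a ∈ ℓ)

variable (L) in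
/-- the set of useful points to add for a deficient point `Q` -/
noncomputable def good (S : Finset P) (Q : P) : Finset P :=
  (insert Q ((Ml L S Q).biUnion (fun ℓ => (univ.filter (· ∈ ℓ)).erase Q))) \ S

local notation "n" => Configuration.ProjectivePlane.order P L

lemma secant_eq (S : Finset P) (Q : P) : secantCount L (↑S : Set P) Q = fc L S Q := by
  unfold fc nsec
  refine Finset.sum_congr rfl fun ℓ _ => ?_
  have h : {p ∈ (↑S : Set P) | p ∈ ℓ} = ↑(S.filter (· ∈ ℓ)) := by ext p; simp
  rw [h, Set.ncard_coe_finset]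

lemma pts_card (ℓ : L) : (univ.filter (· ∈ ℓ) : Finset P).card = n + 1 := by
  have h := Configuration.ProjectivePlane.pointCount_eq P ℓ
  rw [Configuration.pointCount, Nat.card_eq_fintype_card, Fintype.card_subtype] at h
  exact h

lemma lines_through_card (Q : P) : (univ.filter (fun ℓ : L => Q ∈ ℓ)).card = n + 1 := by
  have h := Configuration.ProjectivePlane.lineCount_eq L Q
  rw [Configuration.lineCount, Nat.card_eq_fintype_card, Fintype.card_subtype] at h
  exact h

lemma line_unique {Q p : P} (h : Q ≠ p) {ℓ₁ ℓ₂ : L} (h1 : Q ∈ ℓ₁) (h2 : p ∈ ℓ₁)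
    (h3 : Q ∈ ℓ₂) (h4 : p ∈ ℓ₂) : ℓ₁ = ℓ₂ := by
  rcases Configuration.Nondegenerate.eq_or_eq h1 h2 h3 h4 with h' | h'
  · exact absurd h' h
  · exact h' 

lemma fc_mono {S T : Finset P} (h : S ⊆ T) (Q : P) : fc L S Q ≤ fc L T Q := by
  unfold fc
  refine Finset.sum_le_sum fun ℓ _ => ?_
  split
  · exact Nat.choose_le_choose 2 (Finset.card_le_card (Finset.filter_subset_filter _ h))
  · exact le_rfl


lemma dq_mono (μ : ℕ) {S T : Finset P} (h : S ⊆ T) (Q : P) : dq L μ T Q ≤ dq L μ S Q := by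
  unfold dq
  have := fc_mono (L := L) h Q
  omega

lemma fc_insert_ge {S : Finset P} {Q p : P} (hp : p ∉ S) (hpQ : p ≠ Q)
    {ℓ : L} (hQℓ : Q ∈ ℓ) (hpℓ : p ∈ ℓ) (hSℓ : ∃ a ∈ S, a ∈ ℓ) :
    fc L S Q + 1 ≤ fc L (insert p S) Q := by
  classical
  unfold fc
  rw [← Finset.sum_erase_add _ _ (Finset.mem_univ ℓ), ← Finset.sum_erase_add _ _ (Finset.mem_univ ℓ)]
  have h1 : ∀ m ∈ Finset.univ.erase ℓ,
      (if Q ∈ m then (nsec S m).choose 2 else 0) ≤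
      (if Q ∈ m then (nsec (insert p S) m).choose 2 else 0) := by
    intro m _
    split
    · exact Nat.choose_le_choose 2 (Finset.card_le_card
        (Finset.filter_subset_filter _ (Finset.subset_insert p S)))
    · exact le_rfl
  have h2 : (if Q ∈ ℓ then (nsec S ℓ).choose 2 else 0) + 1 ≤
      (if Q ∈ ℓ then (nsec (insert p S) ℓ).choose 2 else 0) := by
    rw [if_pos hQℓ, if_pos hQℓ]
    have hins : nsec (insert p S) ℓ = nsec S ℓ + 1 := by
      unfold nsec
      rw [Finset.filter_insert, if_pos hpℓ, Finset.card_insert_of_notMem]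
      intro hc
      exact hp (Finset.mem_of_mem_filter p hc)
    obtain ⟨a, haS, haℓ⟩ := hSℓ
    have hn1 : 1 ≤ nsec S ℓ := Finset.card_pos.mpr ⟨a, Finset.mem_filter.mpr ⟨haS, haℓ⟩⟩
    rw [hins, Nat.choose_succ_succ (nsec S ℓ) 1, Nat.choose_one_right]
    have hrfl : (nsec S ℓ).choose (Nat.succ 1) = (nsec S ℓ).choose 2 := rfl
    omega
  calc (∑ m ∈ Finset.univ.erase ℓ, if Q ∈ m then (nsec S m).choose 2 else 0) +
        (if Q ∈ ℓ then (nsec S ℓ).choose 2 else 0) + 1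
      ≤ (∑ m ∈ Finset.univ.erase ℓ, if Q ∈ m then (nsec (insert p S) m).choose 2 else 0) +
        ((if Q ∈ ℓ then (nsec S ℓ).choose 2 else 0) + 1) := by
        rw [add_assoc]; exact Nat.add_le_add_right (Finset.sum_le_sum h1) _
    _ ≤ _ := Nat.add_le_add_left h2 _

lemma sum_nsec (S : Finset P) (Q : P) (hQ : Q ∉ S) :
    ∑ ℓ : L, (if Q ∈ ℓ then nsec S ℓ else 0) = S.card := by
  classical
  have step1 : ∀ ℓ : L, (if Q ∈ ℓ then nsec S ℓ else 0) =
      ∑ p ∈ S, (if Q ∈ ℓ ∧ p ∈ ℓ then 1 else 0) := by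
    intro ℓ
    by_cases hQℓ : Q ∈ ℓ
    · rw [if_pos hQℓ]
      unfold nsec
      rw [Finset.card_filter]
      refine Finset.sum_congr rfl fun p _ => ?_
      by_cases hpℓ : p ∈ ℓ <;> simp [hpℓ, hQℓ]
    · rw [if_neg hQℓ]
      symm
      refine Finset.sum_eq_zero fun p _ => ?_
      simp [hQℓ]
  calc ∑ ℓ : L, (if Q ∈ ℓ then nsec S ℓ else 0)
      = ∑ ℓ : L, ∑ p ∈ S, (if Q ∈ ℓ ∧ p ∈ ℓ then 1 else 0) := Finset.sum_congr rfl fun ℓ _ => step1 ℓ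
    _ = ∑ p ∈ S, ∑ ℓ : L, (if Q ∈ ℓ ∧ p ∈ ℓ then 1 else 0) := Finset.sum_comm
    _ = ∑ p ∈ S, 1 := by
        refine Finset.sum_congr rfl fun p hp => ?_
        have hQp : Q ≠ p := fun h => hQ (h ▸ hp)
        have hline := Configuration.HasLines.mkLine_ax (P := P) (L := L) hQp
        rw [← Finset.card_filter]
        rw [Finset.card_eq_one]
        refine ⟨Configuration.HasLines.mkLine hQp, ?_⟩
        ext ℓ
        simp only [Finset.mem_filter, Finset.mem_univ, true_and, Finset.mem_singleton]
        constructor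
        · rintro ⟨h1, h2⟩
          exact line_unique hQp h1 h2 hline.1 hline.2
        · rintro rfl
          exact hline
    _ = S.card := by simp

lemma card_le_fc_add_M (S : Finset P) (Q : P) (hQ : Q ∉ S) :
    S.card ≤ fc L S Q + (Ml L S Q).card := by
  classical
  have h0 := sum_nsec (L := L) S Q hQ
  have h1 : S.card = ∑ ℓ ∈ Ml L S Q, nsec S ℓ := by
    rw [← h0]
    rw [← Finset.sum_subset (Finset.subset_univ (Ml L S Q))]
    · refine Finset.sum_congr rfl fun ℓ hℓ => ?_
      simp only [Ml, Finset.mem_filter] at hℓ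
      rw [if_pos hℓ.2.1]
    · intro ℓ _ hℓ
      simp only [Ml, Finset.mem_filter, Finset.mem_univ, true_and, not_and] at hℓ
      by_cases hQℓ : Q ∈ ℓ
      · rw [if_pos hQℓ]
        have he := hℓ hQℓ
        unfold nsec
        rw [Finset.card_eq_zero, Finset.filter_eq_empty_iff]
        intro a ha hint
        exact he ⟨a, ha, hint⟩
      · rw [if_neg hQℓ]
  have h2 : ∀ ℓ ∈ Ml L S Q, nsec S ℓ ≤ (nsec S ℓ).choose 2 + 1 := by
    intro ℓ _
    have hm : ∀ m : ℕ, m ≤ m.choose 2 + 1 := by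
      intro m
      induction m with
      | zero => simp
      | succ k ih =>
        rw [Nat.choose_succ_succ k 1, Nat.choose_one_right]
        have hrfl : k.choose (Nat.succ 1) = k.choose 2 := rfl
        omega
    exact hm _
  have h3 : ∑ ℓ ∈ Ml L S Q, (nsec S ℓ).choose 2 ≤ fc L S Q := by
    unfold fc
    have heq : ∑ ℓ ∈ Ml L S Q, (nsec S ℓ).choose 2 =
        ∑ ℓ ∈ Ml L S Q, (if Q ∈ ℓ then (nsec S ℓ).choose 2 else 0) := by
      refine Finset.sum_congr rfl fun ℓ hℓ => ?_
      simp only [Ml, Finset.mem_filter] at hℓ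
      rw [if_pos hℓ.2.1]
    rw [heq]
    exact Finset.sum_le_sum_of_subset_of_nonneg (Finset.subset_univ _)
      (fun ℓ _ _ => Nat.zero_le _)
  calc S.card = ∑ ℓ ∈ Ml L S Q, nsec S ℓ := h1
    _ ≤ ∑ ℓ ∈ Ml L S Q, ((nsec S ℓ).choose 2 + 1) := Finset.sum_le_sum h2
    _ = (∑ ℓ ∈ Ml L S Q, (nsec S ℓ).choose 2) + (Ml L S Q).card := by
        rw [Finset.sum_add_distrib, Finset.sum_const, smul_eq_mul, mul_one]
    _ ≤ fc L S Q + (Ml L S Q).card := Nat.add_le_add_right h3 _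

lemma M_card_le (S : Finset P) (Q : P) : (Ml L S Q).card ≤ n + 1 := by
  rw [← lines_through_card (L := L) Q]
  refine Finset.card_le_card fun ℓ h => ?_
  simp only [Ml, Finset.mem_filter, Finset.mem_univ, true_and] at h ⊢
  exact h.1

lemma good_spec (S : Finset P) (Q : P) :
    ∀ p ∈ good L S Q, p ∉ S ∧ (p = Q ∨ ∃ ℓ ∈ Ml L S Q, p ∈ ℓ) := by
  intro p hp
  unfold good at hp
  rw [Finset.mem_sdiff] at hp
  refine ⟨hp.2, ?_⟩
  rcases Finset.mem_insert.mp hp.1 with h | h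
  · exact Or.inl h
  · right
    obtain ⟨ℓ, hℓ, hpℓ⟩ := Finset.mem_biUnion.mp h
    exact ⟨ℓ, hℓ, (Finset.mem_filter.mp (Finset.mem_of_mem_erase hpℓ)).2⟩

lemma good_card (S : Finset P) (Q : P) (hQ : Q ∉ S) :
    (Ml L S Q).card * n + 1 ≤ (good L S Q).card + S.card := by
  classical
  have hdisj : ∀ ℓ₁ ∈ Ml L S Q, ∀ ℓ₂ ∈ Ml L S Q, ℓ₁ ≠ ℓ₂ →
      Disjoint ((univ.filter (· ∈ ℓ₁)).erase Q) ((univ.filter (· ∈ ℓ₂)).erase Q) := by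
    intro ℓ₁ h1 ℓ₂ h2 hne
    rw [Finset.disjoint_left]
    intro p hp1 hp2
    simp only [Finset.mem_erase, Finset.mem_filter, Finset.mem_univ, true_and] at hp1 hp2
    simp only [Ml, Finset.mem_filter, Finset.mem_univ, true_and] at h1 h2
    exact hne (line_unique (Ne.symm hp1.1) h1.1 hp1.2 h2.1 hp2.2)
  have hbu : ((Ml L S Q).biUnion (fun ℓ => (univ.filter (· ∈ ℓ)).erase Q)).card =
      (Ml L S Q).card * n := by
    rw [Finset.card_biUnion hdisj]
    have hcongr : ∀ ℓ ∈ Ml L S Q, ((univ.filter (· ∈ ℓ) : Finset P).erase Q).card = n := by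
      intro ℓ hℓ
      simp only [Ml, Finset.mem_filter, Finset.mem_univ, true_and] at hℓ
      rw [Finset.card_erase_of_mem (Finset.mem_filter.mpr ⟨Finset.mem_univ Q, hℓ.1⟩), pts_card]
      rfl
    rw [Finset.sum_congr rfl hcongr, Finset.sum_const, smul_eq_mul]
  have hQnot : Q ∉ (Ml L S Q).biUnion (fun ℓ => (univ.filter (· ∈ ℓ)).erase Q) := by
    rw [Finset.mem_biUnion]
    rintro ⟨ℓ, _, hQℓ⟩
    exact (Finset.mem_erase.mp hQℓ).1 rfl
  have hins : (insert Q ((Ml L S Q).biUnion (fun ℓ => (univ.filter (· ∈ ℓ)).erase Q))).card =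
      (Ml L S Q).card * n + 1 := by
    rw [Finset.card_insert_of_notMem hQnot, hbu]
  calc (Ml L S Q).card * n + 1 = _ := hins.symm
    _ ≤ (good L S Q).card + S.card := Finset.card_le_card_sdiff_add_card

lemma good_subset (S : Finset P) (Q : P) : good L S Q ⊆ univ \ S := by
  intro p hp
  unfold good at hp
  rw [Finset.mem_sdiff] at hp
  exact Finset.mem_sdiff.mpr ⟨Finset.mem_univ p, hp.2⟩

/-- key per-step drop estimate -/
lemma drop (μ : ℕ) (S : Finset P) {p : P} (hp : p ∉ S) :
    Phi L μ (insert p S) +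
      ((((univ \ S).filter (fun Q => fc L S Q < μ)).filter (fun Q => p ∈ good L S Q)).card)
      ≤ Phi L μ S := by
  classical
  set Df := (univ \ S).filter (fun Q => fc L S Q < μ) with hDf
  set A := Df.filter (fun Q => p ∈ good L S Q) with hA
  have hpU : p ∈ univ \ S := Finset.mem_sdiff.mpr ⟨Finset.mem_univ p, hp⟩
  have hU : univ \ insert p S = (univ \ S).erase p := by
    ext x
    simp only [Finset.mem_sdiff, Finset.mem_erase, Finset.mem_insert, Finset.mem_univ,
      true_and, not_or]
  have hper : ∀ Q ∈ (univ \ S).erase p,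
      dq L μ (insert p S) Q + (if Q ∈ A then 1 else 0) ≤ dq L μ S Q := by
    intro Q hQe
    rw [Finset.mem_erase, Finset.mem_sdiff] at hQe
    by_cases hQA : Q ∈ A
    · rw [if_pos hQA]
      rw [hA, Finset.mem_filter, hDf, Finset.mem_filter] at hQA
      obtain ⟨⟨_, hfc⟩, hgood⟩ := hQA
      obtain ⟨hpS, hor⟩ := good_spec (L := L) S Q p hgood
      rcases hor with rfl | ⟨ℓ, hℓM, hpℓ⟩
      · exact absurd rfl hQe.1
      · simp only [Ml, Finset.mem_filter, Finset.mem_univ, true_and] at hℓM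
        have hfi := fc_insert_ge (L := L) hpS (fun h => hQe.1 h.symm) hℓM.1 hpℓ hℓM.2
        have e1 : min (fc L S Q) μ = fc L S Q := min_eq_left hfc.le
        have e2 : min (fc L S Q + 1) μ ≤ min (fc L (insert p S) Q) μ :=
          min_le_min hfi le_rfl
        have e3 : min (fc L S Q + 1) μ = fc L S Q + 1 := min_eq_left hfc
        rw [dq, dq, e1]
        omega
    · rw [if_neg hQA, Nat.add_zero]
      exact dq_mono (L := L) μ (Finset.subset_insert p S) Q
  have hsum : Phi L μ (insert p S) + ∑ Q ∈ (univ \ S).erase p, (if Q ∈ A then 1 else 0) ≤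
      ∑ Q ∈ (univ \ S).erase p, dq L μ S Q := by
    rw [Phi, hU, ← Finset.sum_add_distrib]
    exact Finset.sum_le_sum hper
  have hPhiS : Phi L μ S = (∑ Q ∈ (univ \ S).erase p, dq L μ S Q) + dq L μ S p := by
    rw [Phi, ← Finset.sum_erase_add _ _ hpU]
  have h1 : ∑ Q ∈ (univ \ S).erase p, (if Q ∈ A then 1 else 0) =
      (((univ \ S).erase p).filter (fun Q => Q ∈ A)).card := by
    rw [Finset.card_filter]
  have hsub : A.erase p ⊆ ((univ \ S).erase p).filter (fun Q => Q ∈ A) := by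
    intro x hx
    rw [Finset.mem_erase] at hx
    have hxU : x ∈ univ \ S := Finset.mem_of_mem_filter x (Finset.mem_of_mem_filter x hx.2)
    exact Finset.mem_filter.mpr ⟨Finset.mem_erase.mpr ⟨hx.1, hxU⟩, hx.2⟩
  have hAc : A.card ≤ (∑ Q ∈ (univ \ S).erase p, (if Q ∈ A then 1 else 0)) + dq L μ S p := by
    rw [h1]
    by_cases hpA : p ∈ A
    · have hdqp : 1 ≤ dq L μ S p := by
        have hpDf : p ∈ Df := Finset.mem_of_mem_filter p hpA
        rw [hDf, Finset.mem_filter] at hpDf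
        rw [dq, min_eq_left hpDf.2.le]
        omega
      have := Finset.card_le_card hsub
      rw [Finset.card_erase_of_mem hpA] at this
      omega
    · have heq : A.erase p = A := Finset.erase_eq_of_notMem hpA
      have hle := Finset.card_le_card hsub
      rw [heq] at hle
      omega
  omega

/-- the greedy step -/
lemma step (μ : ℕ) (hμ : 1 ≤ μ) (S : Finset P) (hS : S.Nonempty) (hΦ : Phi L μ S ≠ 0) :
    (((S.card : ℝ) - μ + 1) * n + 1 - S.card ≤ (Fintype.card P : ℝ)) ∧
    ∃ p ∉ S, (Phi L μ (insert p S) : ℝ) ≤ (Phi L μ S : ℝ) *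
      (1 - max (((S.card : ℝ) - μ + 1) * n + 1 - S.card) 0 / (μ * (Fintype.card P : ℝ))) := by
  classical
  set N := (Fintype.card P : ℝ) with hN
  set sr := (S.card : ℝ) with hsr
  set G := (sr - μ + 1) * (n : ℝ) + 1 - sr with hG
  set Df := (univ \ S).filter (fun Q => fc L S Q < μ) with hDf
  have hDfne : Df.Nonempty := by
    by_contra h
    rw [Finset.not_nonempty_iff_eq_empty] at h
    apply hΦ
    rw [Phi]
    refine Finset.sum_eq_zero fun Q hQ => ?_
    have hge : ¬ fc L S Q < μ := by
      intro hlt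
      have : Q ∈ Df := Finset.mem_filter.mpr ⟨hQ, hlt⟩
      rw [h] at this
      exact absurd this (Finset.notMem_empty Q)
    rw [dq, min_eq_right (le_of_not_gt hge)]
    omega
  have hNpos : (0 : ℝ) < N := by
    rw [hN]
    exact_mod_cast Fintype.card_pos_iff.mpr ⟨hDfne.choose⟩
  have hμR : (0 : ℝ) < (μ : ℝ) := by exact_mod_cast hμ
  -- per deficient point estimates
  have hQfacts : ∀ Q ∈ Df, G ≤ ((good L S Q).card : ℝ) ∧ G ≤ N := by
    intro Q hQ
    rw [hDf, Finset.mem_filter, Finset.mem_sdiff] at hQ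
    obtain ⟨⟨_, hQS⟩, hfc⟩ := hQ
    have hcard := card_le_fc_add_M (L := L) S Q hQS
    have hgc := good_card (L := L) S Q hQS
    have hMle := M_card_le (L := L) S Q
    have hstep1 : sr - μ + 1 ≤ ((Ml L S Q).card : ℝ) := by
      have : S.card + 1 ≤ μ + (Ml L S Q).card := by omega
      have := (Nat.cast_le (α := ℝ)).mpr this
      push_cast at this
      linarith
    have hstep2 : ((Ml L S Q).card : ℝ) * (n : ℝ) + 1 - sr ≤ ((good L S Q).card : ℝ) := by
      have := (Nat.cast_le (α := ℝ)).mpr hgc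
      push_cast at this
      linarith
    have hGle : G ≤ ((Ml L S Q).card : ℝ) * (n : ℝ) + 1 - sr := by
      rw [hG]
      have hnn : (0 : ℝ) ≤ (n : ℝ) := Nat.cast_nonneg n
      nlinarith [hstep1]
    constructor
    · linarith
    · have hMn : ((Ml L S Q).card : ℝ) ≤ (n : ℝ) + 1 := by exact_mod_cast hMle
      have hNval : N = ((n : ℝ)) ^ 2 + (n : ℝ) + 1 := by
        rw [hN, Configuration.ProjectivePlane.card_points P L]
        push_cast
        ring
      have hsr0 : (0 : ℝ) ≤ sr := Nat.cast_nonneg _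
      have hnn : (0 : ℝ) ≤ (n : ℝ) := Nat.cast_nonneg n
      nlinarith [hGle]
  obtain ⟨Q₀, hQ₀⟩ := hDfne
  refine ⟨(hQfacts Q₀ hQ₀).2, ?_⟩
  -- double counting
  set Ath : P → ℕ := fun p => (Df.filter (fun Q => p ∈ good L S Q)).card with hAth
  have hswap : ∑ p ∈ univ \ S, Ath p = ∑ Q ∈ Df, (good L S Q).card := by
    rw [hAth]
    have e1 : ∀ p, (Df.filter (fun Q => p ∈ good L S Q)).card =
        ∑ Q ∈ Df, (if p ∈ good L S Q then 1 else 0) := fun p => Finset.card_filter _ _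
    simp only [e1]
    rw [Finset.sum_comm]
    refine Finset.sum_congr rfl fun Q hQ => ?_
    rw [← Finset.card_filter]
    congr 1
    rw [Finset.filter_mem_eq_inter, Finset.inter_eq_right]
    exact good_subset (L := L) S Q
  have hgp0 : (0 : ℝ) ≤ max G 0 := le_max_right _ _
  have hlow : (Df.card : ℝ) * max G 0 ≤ ∑ p ∈ univ \ S, (Ath p : ℝ) := by
    have : ∀ Q ∈ Df, max G 0 ≤ ((good L S Q).card : ℝ) := fun Q hQ =>
      max_le (hQfacts Q hQ).1 (Nat.cast_nonneg _)
    calc (Df.card : ℝ) * max G 0 = ∑ _Q ∈ Df, max G 0 := by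
          rw [Finset.sum_const, nsmul_eq_mul, mul_comm]
      _ ≤ ∑ Q ∈ Df, ((good L S Q).card : ℝ) := Finset.sum_le_sum this
      _ = ∑ p ∈ univ \ S, (Ath p : ℝ) := by
          rw [← Nat.cast_sum, ← Nat.cast_sum, hswap]
  -- pick the best point
  have hUne : (univ \ S).Nonempty := ⟨Q₀, Finset.mem_sdiff.mpr
    ⟨Finset.mem_univ _, ((Finset.mem_filter.mp hQ₀).1 |> Finset.mem_sdiff.mp).2⟩⟩
  obtain ⟨p, hpU, hpmax⟩ := Finset.exists_max_image (univ \ S) Ath hUne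
  have hpS : p ∉ S := (Finset.mem_sdiff.mp hpU).2
  have hsumle : ∑ p' ∈ univ \ S, (Ath p' : ℝ) ≤ N * (Ath p : ℝ) := by
    calc ∑ p' ∈ univ \ S, (Ath p' : ℝ) ≤ ((univ \ S).card : ℝ) * (Ath p : ℝ) := by
          have := Finset.sum_le_card_nsmul (univ \ S) (fun x => (Ath x : ℝ))
            ((Ath p : ℝ)) (fun x hx => by
              show (Ath x : ℝ) ≤ (Ath p : ℝ)
              exact_mod_cast hpmax x hx)
          rw [nsmul_eq_mul] at this
          exact this
      _ ≤ N * (Ath p : ℝ) := by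
          have h1 : ((univ \ S).card : ℝ) ≤ N := by
            rw [hN]
            exact_mod_cast Finset.card_le_univ _
          have h2 : (0 : ℝ) ≤ (Ath p : ℝ) := Nat.cast_nonneg _
          nlinarith
  have hPhiDf : (Phi L μ S : ℝ) ≤ (μ : ℝ) * (Df.card : ℝ) := by
    have h1 : Phi L μ S ≤ μ * Df.card := by
      rw [Phi]
      calc ∑ Q ∈ univ \ S, dq L μ S Q = ∑ Q ∈ Df, dq L μ S Q := by
            symm
            refine Finset.sum_subset (Finset.filter_subset _ _) ?_
            intro Q hQmem hQ
            rw [hDf, Finset.mem_filter] at hQ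
            have hnlt : ¬ fc L S Q < μ := fun h' => hQ ⟨hQmem, h'⟩
            rw [dq, min_eq_right (le_of_not_gt hnlt)]
            omega
        _ ≤ Df.card * μ := Finset.sum_le_card_nsmul Df _ μ (fun Q _ => by rw [dq]; omega)
        _ = μ * Df.card := Nat.mul_comm _ _
    exact_mod_cast h1
  have hdrop := drop (L := L) μ S hpS
  have hdropR : (Phi L μ (insert p S) : ℝ) ≤ (Phi L μ S : ℝ) - (Ath p : ℝ) := by
    rw [hDf] at hAth
    have : Phi L μ (insert p S) + Ath p ≤ Phi L μ S := hdrop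
    have := (Nat.cast_le (α := ℝ)).mpr this
    push_cast at this
    linarith
  refine ⟨p, hpS, ?_⟩
  have hkey : (Df.card : ℝ) * max G 0 ≤ N * (Ath p : ℝ) := le_trans hlow hsumle
  have hfin : (Phi L μ S : ℝ) * (max G 0 / ((μ : ℝ) * N)) ≤ (Ath p : ℝ) := by
    rw [div_eq_mul_inv, mul_inv]
    have hΦDf : (Phi L μ S : ℝ) / (μ : ℝ) ≤ (Df.card : ℝ) := by
      rw [div_le_iff₀ hμR]
      linarith [hPhiDf]
    have h2 : (Phi L μ S : ℝ) / (μ : ℝ) * max G 0 ≤ (Df.card : ℝ) * max G 0 :=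
      mul_le_mul_of_nonneg_right hΦDf hgp0
    have h3 : (Phi L μ S : ℝ) / (μ : ℝ) * max G 0 / N ≤ (Ath p : ℝ) := by
      rw [div_le_iff₀ hNpos]
      calc (Phi L μ S : ℝ) / (μ : ℝ) * max G 0 ≤ (Df.card : ℝ) * max G 0 := h2
        _ ≤ N * (Ath p : ℝ) := hkey
        _ = (Ath p : ℝ) * N := mul_comm _ _
    calc (Phi L μ S : ℝ) * (max G 0 * ((μ : ℝ)⁻¹ * N⁻¹)) =
          (Phi L μ S : ℝ) / (μ : ℝ) * max G 0 / N := by ring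
      _ ≤ (Ath p : ℝ) := h3
  calc (Phi L μ (insert p S) : ℝ) ≤ (Phi L μ S : ℝ) - (Ath p : ℝ) := hdropR
    _ ≤ (Phi L μ S : ℝ) - (Phi L μ S : ℝ) * (max G 0 / ((μ : ℝ) * N)) := by linarith [hfin]
    _ = (Phi L μ S : ℝ) * (1 - max G 0 / ((μ : ℝ) * N)) := by ring


lemma phi_zero_sat (μ : ℕ) (S : Finset P) (h : Phi L μ S = 0) :
    IsMuSaturating L (↑S : Set P) μ := by
  intro Q hQ
  have hQS : Q ∉ S := fun hc => hQ (Finset.mem_coe.mpr hc)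
  have hmem : Q ∈ univ \ S := Finset.mem_sdiff.mpr ⟨Finset.mem_univ Q, hQS⟩
  have hz : dq L μ S Q = 0 := by
    by_contra hne
    have hpos : 0 < dq L μ S Q := Nat.pos_of_ne_zero hne
    have : 0 < Phi L μ S := by
      rw [Phi]
      exact Finset.sum_pos' (fun _ _ => Nat.zero_le _) ⟨Q, hmem, hpos⟩
    omega
  rw [secant_eq]
  rw [dq] at hz
  have h1 := min_le_left (fc L S Q) μ
  have h2 := min_le_right (fc L S Q) μ
  omega

/-- The greedy invariant, by induction on the number of steps. -/
lemma invariant (μ : ℕ) (hμ : 1 ≤ μ) (p₀ : P) (j : ℕ) :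
    ∃ S : Finset P, S.card ≤ 1 + j ∧
      (Phi L μ S = 0 ∨ (S.card = 1 + j ∧
        (∀ i ∈ Finset.Icc 1 j, max (((i : ℝ) - μ + 1) * (n : ℝ) + 1 - i) 0 ≤
          (Fintype.card P : ℝ)) ∧
        (Phi L μ S : ℝ) ≤ (μ : ℝ) * ((Fintype.card P : ℝ) - 1) *
          ∏ i ∈ Finset.Icc 1 j,
            (1 - max (((i : ℝ) - μ + 1) * (n : ℝ) + 1 - i) 0 /
              ((μ : ℝ) * (Fintype.card P : ℝ))))) := by
  have hNpos : (0:ℝ) < (Fintype.card P : ℝ) := by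
    exact_mod_cast Fintype.card_pos_iff.mpr ⟨p₀⟩
  have hμpos : (0:ℝ) < (μ:ℝ) := by exact_mod_cast hμ
  have hμ1 : (1:ℝ) ≤ (μ:ℝ) := by exact_mod_cast hμ
  induction j with
  | zero =>
    refine ⟨{p₀}, by simp, Or.inr ⟨by simp, ?_, ?_⟩⟩
    · intro i hi
      rw [Finset.mem_Icc] at hi
      omega
    rw [show Finset.Icc 1 0 = (∅ : Finset ℕ) from Finset.Icc_eq_empty (by omega),
      Finset.prod_empty, mul_one]
    have hc1 : 1 ≤ Fintype.card P := Fintype.card_pos_iff.mpr ⟨p₀⟩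
    have hPhile : Phi L μ {p₀} ≤ μ * (Fintype.card P - 1) := by
      rw [Phi]
      calc ∑ Q ∈ univ \ {p₀}, dq L μ {p₀} Q ≤ (univ \ {p₀}).card * μ :=
            Finset.sum_le_card_nsmul _ _ μ (fun Q _ => by rw [dq]; omega)
        _ = (Fintype.card P - 1) * μ := by
            rw [Finset.card_sdiff_of_subset (Finset.subset_univ _), Finset.card_univ,
              Finset.card_singleton]
        _ = μ * (Fintype.card P - 1) := Nat.mul_comm _ _
    have hcast := (Nat.cast_le (α := ℝ)).mpr hPhile
    rw [Nat.cast_mul, Nat.cast_sub hc1] at hcast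
    exact_mod_cast hcast
  | succ k ih =>
    obtain ⟨S, hcard, hdisj⟩ := ih
    rcases hdisj with h0 | ⟨hcardeq, hGall, hPhib⟩
    · exact ⟨S, le_trans hcard (by omega), Or.inl h0⟩
    · by_cases hP0 : Phi L μ S = 0
      · exact ⟨S, le_trans hcard (by omega), Or.inl hP0⟩
      · have hSne : S.Nonempty := Finset.card_pos.mp (by omega)
        obtain ⟨hGN, p, hpS, hstep⟩ := step μ hμ S hSne hP0
        have hck : S.card = k + 1 := by omega
        rw [hck] at hstep hGN
        have hGmax : max ((((k+1:ℕ) : ℝ) - μ + 1) * (n : ℝ) + 1 - ((k+1:ℕ):ℝ)) 0 ≤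
            (Fintype.card P : ℝ) := max_le hGN hNpos.le
        refine ⟨insert p S, ?_, Or.inr ⟨?_, ?_, ?_⟩⟩
        · rw [Finset.card_insert_of_notMem hpS]; omega
        · rw [Finset.card_insert_of_notMem hpS]; omega
        · intro i hi
          rw [Finset.mem_Icc] at hi
          by_cases hik : i ≤ k
          · exact hGall i (Finset.mem_Icc.mpr ⟨hi.1, hik⟩)
          · have : i = k + 1 := by omega
            rw [this]
            exact_mod_cast hGmax
        · have hprod := Finset.prod_Icc_succ_top (a := 1) (b := k) (by omega)
            (f := fun i : ℕ => (1 - max (((i : ℝ) - μ + 1) * (n : ℝ) + 1 - i) 0 /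
              ((μ : ℝ) * (Fintype.card P : ℝ))))
          rw [hprod]
          have hfac : (0:ℝ) ≤ 1 - max ((((k+1:ℕ) : ℝ) - μ + 1) * (n : ℝ) + 1 - ((k+1:ℕ):ℝ)) 0 /
              ((μ : ℝ) * (Fintype.card P : ℝ)) := by
            have hle := hGmax
            have hμN : (Fintype.card P : ℝ) ≤ (μ : ℝ) * (Fintype.card P : ℝ) := by
              nlinarith [mul_le_mul_of_nonneg_right hμ1 hNpos.le]
            have hpos : (0:ℝ) < (μ : ℝ) * (Fintype.card P : ℝ) := by positivity
            rw [sub_nonneg, div_le_one hpos]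
            linarith
          calc (Phi L μ (insert p S) : ℝ) ≤ _ := hstep
            _ ≤ ((μ : ℝ) * ((Fintype.card P : ℝ) - 1) *
                ∏ i ∈ Finset.Icc 1 k, (1 - max (((i : ℝ) - μ + 1) * (n : ℝ) + 1 - i) 0 /
                  ((μ : ℝ) * (Fintype.card P : ℝ)))) *
                (1 - max ((((k+1:ℕ) : ℝ) - μ + 1) * (n : ℝ) + 1 - ((k+1:ℕ):ℝ)) 0 /
                  ((μ : ℝ) * (Fintype.card P : ℝ))) :=
              mul_le_mul_of_nonneg_right hPhib hfac
            _ = _ := by ring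


/-- running the greedy process for `K` steps with a sufficient coverage budget -/
lemma greedy (μ : ℕ) (hμ : 1 ≤ μ) (p₀ : P) (K : ℕ)
    (hsum : (μ:ℝ) * (Fintype.card P : ℝ) * Real.log ((μ:ℝ) * (Fintype.card P : ℝ)) ≤
       ∑ i ∈ Finset.Icc 1 K, max (((i:ℝ) - μ + 1) * (n:ℝ) + 1 - i) 0) :
    ∃ S : Finset P, S.card ≤ 1 + K ∧ Phi L μ S = 0 := by
  obtain ⟨S, hcard, hdisj⟩ := invariant (L := L) μ hμ p₀ K
  refine ⟨S, hcard, ?_⟩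
  rcases hdisj with h0 | ⟨_, hGall, hPhib⟩
  · exact h0
  · have hNpos : (0:ℝ) < (Fintype.card P : ℝ) := by
      exact_mod_cast Fintype.card_pos_iff.mpr ⟨p₀⟩
    have hμpos : (0:ℝ) < (μ:ℝ) := by exact_mod_cast hμ
    have hμ1 : (1:ℝ) ≤ (μ:ℝ) := by exact_mod_cast hμ
    have hμNpos : (0:ℝ) < (μ:ℝ) * (Fintype.card P : ℝ) := by positivity
    have hprodexp : ∏ i ∈ Finset.Icc 1 K,
        (1 - max (((i : ℝ) - μ + 1) * (n : ℝ) + 1 - i) 0 /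
          ((μ : ℝ) * (Fintype.card P : ℝ)))
        ≤ Real.exp (-(∑ i ∈ Finset.Icc 1 K, max (((i:ℝ) - μ + 1) * (n:ℝ) + 1 - i) 0 /
            ((μ : ℝ) * (Fintype.card P : ℝ)))) := by
      have h1 : ∀ i ∈ Finset.Icc 1 K,
          (0:ℝ) ≤ 1 - max (((i : ℝ) - μ + 1) * (n : ℝ) + 1 - i) 0 /
            ((μ : ℝ) * (Fintype.card P : ℝ)) := by
        intro i hi
        have hle := hGall i hi
        have hμN : (Fintype.card P : ℝ) ≤ (μ : ℝ) * (Fintype.card P : ℝ) := by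
          nlinarith [mul_le_mul_of_nonneg_right hμ1 hNpos.le]
        rw [sub_nonneg, div_le_one hμNpos]
        linarith
      have h2 : ∀ i ∈ Finset.Icc 1 K,
          1 - max (((i : ℝ) - μ + 1) * (n : ℝ) + 1 - i) 0 /
            ((μ : ℝ) * (Fintype.card P : ℝ)) ≤
          Real.exp (-(max (((i : ℝ) - μ + 1) * (n : ℝ) + 1 - i) 0 /
            ((μ : ℝ) * (Fintype.card P : ℝ)))) := by
        intro i _
        have := Real.add_one_le_exp (-(max (((i : ℝ) - μ + 1) * (n : ℝ) + 1 - i) 0 /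
            ((μ : ℝ) * (Fintype.card P : ℝ))))
        linarith
      calc ∏ i ∈ Finset.Icc 1 K, (1 - max (((i : ℝ) - μ + 1) * (n : ℝ) + 1 - i) 0 /
              ((μ : ℝ) * (Fintype.card P : ℝ)))
          ≤ ∏ i ∈ Finset.Icc 1 K, Real.exp (-(max (((i : ℝ) - μ + 1) * (n : ℝ) + 1 - i) 0 /
              ((μ : ℝ) * (Fintype.card P : ℝ)))) := Finset.prod_le_prod h1 h2
        _ = Real.exp (∑ i ∈ Finset.Icc 1 K, -(max (((i : ℝ) - μ + 1) * (n : ℝ) + 1 - i) 0 /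
              ((μ : ℝ) * (Fintype.card P : ℝ)))) := (Real.exp_sum _ _).symm
        _ = _ := by rw [Finset.sum_neg_distrib, ← Finset.sum_div]
    have hlogle : Real.log ((μ:ℝ) * (Fintype.card P : ℝ)) ≤
        ∑ i ∈ Finset.Icc 1 K, max (((i:ℝ) - μ + 1) * (n:ℝ) + 1 - i) 0 /
          ((μ : ℝ) * (Fintype.card P : ℝ)) := by
      rw [← Finset.sum_div, le_div_iff₀ hμNpos]
      nlinarith [hsum]
    have hexple : Real.exp (-(∑ i ∈ Finset.Icc 1 K, max (((i:ℝ) - μ + 1) * (n:ℝ) + 1 - i) 0 /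
          ((μ : ℝ) * (Fintype.card P : ℝ)))) ≤ ((μ:ℝ) * (Fintype.card P : ℝ))⁻¹ := by
      calc Real.exp (-(∑ i ∈ Finset.Icc 1 K, max (((i:ℝ) - μ + 1) * (n:ℝ) + 1 - i) 0 /
              ((μ : ℝ) * (Fintype.card P : ℝ))))
          ≤ Real.exp (-(Real.log ((μ:ℝ) * (Fintype.card P : ℝ)))) :=
            Real.exp_le_exp.mpr (neg_le_neg hlogle)
        _ = ((μ:ℝ) * (Fintype.card P : ℝ))⁻¹ := by
            rw [Real.exp_neg, Real.exp_log hμNpos]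
    have hNm1 : (0:ℝ) ≤ (μ:ℝ) * ((Fintype.card P : ℝ) - 1) := by
      have hc1 : (1:ℝ) ≤ (Fintype.card P : ℝ) := by
        exact_mod_cast Fintype.card_pos_iff.mpr ⟨p₀⟩
      nlinarith
    have hfinal : (Phi L μ S : ℝ) < 1 := by
      have h3 : (Phi L μ S : ℝ) ≤ (μ:ℝ) * ((Fintype.card P : ℝ) - 1) *
          ((μ:ℝ) * (Fintype.card P : ℝ))⁻¹ :=
        le_trans hPhib (mul_le_mul_of_nonneg_left (le_trans hprodexp hexple) hNm1)
      have heq : (μ:ℝ) * ((Fintype.card P : ℝ) - 1) * ((μ:ℝ) * (Fintype.card P : ℝ))⁻¹ =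
          ((Fintype.card P : ℝ) - 1) / (Fintype.card P : ℝ) := by
        field_simp
      have h4 : (μ:ℝ) * ((Fintype.card P : ℝ) - 1) * ((μ:ℝ) * (Fintype.card P : ℝ))⁻¹ < 1 := by
        rw [heq, div_lt_one hNpos]
        linarith
      linarith
    have hnat : Phi L μ S < 1 := by exact_mod_cast hfinal
    omega
end MuSat

set_option maxHeartbeats 1600000 in
theorem mu_saturating_iterated_bound (q : ℕ) (hq : 2 ≤ q)
    (P L : Type*) [Fintype P] [Fintype L] [Membership P L]
    [Configuration.ProjectivePlane P L]
    (horder : Configuration.ProjectivePlane.order P L = q)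
    (δ : ℝ) (hδ : δ = 1 / Real.sqrt ((q + 1) * Real.log (q + 1)))
    (D : ℕ → ℝ) (hD1 : D 1 = 1)
    (hDi : ∀ i : ℕ, 2 ≤ i → D i = D (i - 1) + 1 + (D (i - 1) + δ) / q + δ) :
    ∀ μ : ℕ, 2 ≤ μ → ∃ S : Finset P, IsMuSaturating L (↑S : Set P) μ ∧
      (S.card : ℝ) ≤ 2 * D μ * Real.sqrt ((q + 1) * Real.log (q + 1)) + 2 := by
  intro μ hμ2
  classical
  have hμ1 : 1 ≤ μ := by omega
  have hqR : (2:ℝ) ≤ (q:ℝ) := by exact_mod_cast hq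
  set x : ℝ := Real.log ((q:ℝ) + 1) with hxdef
  set s : ℝ := Real.sqrt (((q:ℝ) + 1) * x) with hsdef
  have hxpos : 0 < x := by rw [hxdef]; exact Real.log_pos (by linarith)
  have hWpos : (0:ℝ) < ((q:ℝ) + 1) * x := by positivity
  have hspos : 0 < s := by rw [hsdef]; exact Real.sqrt_pos.mpr hWpos
  have hs2 : s ^ 2 = ((q:ℝ) + 1) * x := by rw [hsdef]; exact Real.sq_sqrt hWpos.le
  have hδval : δ = 1 / s := hδ
  have hδ0 : (0:ℝ) ≤ δ := by rw [hδval]; positivity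
  have hδs : δ * s = 1 := by rw [hδval]; field_simp
  have hDge := MuSatAux.D_ge q (by omega) δ hδ0 D hD1 hDi μ hμ1
  have hμR : (2:ℝ) ≤ (μ:ℝ) := by exact_mod_cast hμ2
  have hballoc : (μ:ℝ) * (2*s + 2) ≤ 2 * D μ * s + 2 := by
    have h1 : 2 * (1 + ((μ:ℝ) - 1) * (1 + δ)) * s ≤ 2 * D μ * s := by
      nlinarith [hspos, hDge]
    nlinarith [h1, hδs, hμR]
  have hcardP : (Fintype.card P : ℝ) = (q:ℝ)^2 + (q:ℝ) + 1 := by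
    rw [Configuration.ProjectivePlane.card_points P L, horder]
    push_cast
    ring
  have hPpos : 0 < Fintype.card P := by
    rw [Configuration.ProjectivePlane.card_points P L]
    omega
  obtain ⟨p₀⟩ := Fintype.card_pos_iff.mp hPpos
  by_cases hq4 : 4 ≤ q
  · -- greedy construction
    have hqR4 : (4:ℝ) ≤ (q:ℝ) := by exact_mod_cast hq4
    have hx16 : (1.6:ℝ) ≤ x := by
      have h5 : (5:ℝ) ≤ (q:ℝ) + 1 := by linarith
      have hl := Real.log_le_log (by norm_num : (0:ℝ) < 5) h5
      rw [hxdef]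
      linarith [MuSatAux.log5]
    have hs28 : (2.8:ℝ) ≤ s := by nlinarith [hspos, hs2]
    set y : ℝ := (μ:ℝ) * (2*s + 2) with hydef
    have hyval : y = 2*((μ:ℝ)*s) + 2*(μ:ℝ) := by rw [hydef]; ring
    have hprod : (5.6:ℝ) ≤ (μ:ℝ)*s := by nlinarith [hμR, hs28]
    have hy15 : (15:ℝ) ≤ y := by rw [hyval]; linarith
    set K : ℕ := ⌊y⌋₊ - 1 with hKdef
    have hfl1 : 1 ≤ ⌊y⌋₊ := Nat.le_floor (by push_cast; linarith)
    have hKr : (K:ℝ) = (⌊y⌋₊:ℝ) - 1 := by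
      rw [hKdef, Nat.cast_sub hfl1]
      norm_num
    have hfle : (⌊y⌋₊:ℝ) ≤ y := Nat.floor_le (by linarith)
    have hflg : y - 1 < (⌊y⌋₊:ℝ) := Nat.sub_one_lt_floor y
    have hKlow : y - 2 < (K:ℝ) := by rw [hKr]; linarith
    have hKup : (K:ℝ) ≤ y - 1 := by rw [hKr]; linarith
    have hK2μ : 2*μ ≤ K := by
      have h1 : ((2*μ:ℕ):ℝ) < (K:ℝ) := by
        push_cast
        linarith [hKlow, hyval, hprod]
      exact_mod_cast h1.le
    have hLr : 2*(μ:ℝ)*s - 2 ≤ ((K - 2*μ:ℕ):ℝ) := by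
      rw [Nat.cast_sub hK2μ]
      push_cast
      have : 2*(μ:ℝ)*s = 2*((μ:ℝ)*s) := by ring
      linarith [hKlow, hyval]
    have hlogμ : Real.log (μ:ℝ) ≤ (μ:ℝ) - 1 := Real.log_le_sub_one_of_pos (by linarith)
    have hsplit : (μ:ℝ) = 2 ∨ (3:ℝ) ≤ (μ:ℝ) := by
      rcases (by omega : μ = 2 ∨ 3 ≤ μ) with h | h
      · left; rw [h]; norm_num
      · right; exact_mod_cast h
    have hlog2 : Real.log 2 ≤ 0.694 := by linarith [Real.log_two_lt_d9]
    have hmain := MuSatAux.mainIneq (q:ℝ) (μ:ℝ) x s ((K - 2*μ:ℕ):ℝ) hqR4 hμR hx16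
      hspos.le hs2 hLr hlogμ hsplit hlog2
    have hsched := MuSatAux.sum_sched q μ K hq hμ1 hK2μ
    have hNpos : (0:ℝ) < (Fintype.card P : ℝ) := by rw [hcardP]; positivity
    have hμN : (0:ℝ) < (μ:ℝ) * (Fintype.card P:ℝ) := by positivity
    have hlogN : Real.log ((μ:ℝ) * (Fintype.card P:ℝ)) ≤ Real.log (μ:ℝ) + 2 * x := by
      rw [Real.log_mul (by linarith) (by linarith)]
      have h1 : (Fintype.card P : ℝ) ≤ ((q:ℝ)+1)^2 := by rw [hcardP]; nlinarith
      have h2 : Real.log (Fintype.card P : ℝ) ≤ Real.log (((q:ℝ)+1)^2) :=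
        Real.log_le_log hNpos h1
      rw [Real.log_pow] at h2
      rw [hxdef]
      push_cast at h2
      linarith
    have hsum : (μ:ℝ) * (Fintype.card P:ℝ) * Real.log ((μ:ℝ)*(Fintype.card P:ℝ)) ≤
        ∑ i ∈ Finset.Icc 1 K,
          max (((i:ℝ) - (μ:ℝ) + 1) * ((Configuration.ProjectivePlane.order P L : ℕ):ℝ)
            + 1 - (i:ℝ)) 0 := by
      simp only [horder]
      have h1 : (μ:ℝ) * (Fintype.card P:ℝ) * Real.log ((μ:ℝ)*(Fintype.card P:ℝ)) ≤
          (μ:ℝ) * ((q:ℝ)^2+(q:ℝ)+1) * (Real.log (μ:ℝ) + 2*x) := by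
        rw [hcardP]
        have hNN : (0:ℝ) ≤ (μ:ℝ)*((q:ℝ)^2+(q:ℝ)+1) := by positivity
        have hlog' : Real.log ((μ:ℝ) * ((q:ℝ)^2+(q:ℝ)+1)) ≤ Real.log (μ:ℝ) + 2 * x := by
          rw [← hcardP]
          exact hlogN
        nlinarith [mul_le_mul_of_nonneg_left hlog' hNN]
      calc (μ:ℝ) * (Fintype.card P:ℝ) * Real.log ((μ:ℝ)*(Fintype.card P:ℝ))
          ≤ (μ:ℝ) * ((q:ℝ)^2+(q:ℝ)+1) * (Real.log (μ:ℝ) + 2*x) := h1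
        _ ≤ ((q:ℝ) - 1) * ((K - 2*μ:ℕ):ℝ) * (((K - 2*μ:ℕ):ℝ) + 1) / 2 +
              ((μ:ℝ) * ((q:ℝ) - 2) + (q:ℝ) + 1) * (((K - 2*μ:ℕ):ℝ) + 1) := hmain
        _ ≤ _ := hsched
    obtain ⟨S, hcard, hphi⟩ := MuSat.greedy (L := L) μ hμ1 p₀ K hsum
    refine ⟨S, MuSat.phi_zero_sat (L := L) μ S hphi, ?_⟩
    have hc1 : ((S.card : ℕ):ℝ) ≤ 1 + (K:ℝ) := by exact_mod_cast hcard
    calc (S.card : ℝ) ≤ 1 + (K:ℝ) := hc1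
      _ ≤ y := by linarith [hKup]
      _ ≤ 2 * D μ * s + 2 := by rw [hydef] at *; exact hballoc
  · -- small q : the whole plane works
    refine ⟨Finset.univ, ?_, ?_⟩
    · intro Q hQ
      exact absurd (Finset.mem_coe.mpr (Finset.mem_univ Q)) hQ
    · rw [Finset.card_univ]
      have h47 : (q:ℝ)^2 + (q:ℝ) + 1 ≤ (μ:ℝ)*(2*s+2) := by
        have hcase : q = 2 ∨ q = 3 := by omega
        rcases hcase with rfl | rfl
        · have h3 : ((2:ℕ):ℝ) + 1 = 3 := by norm_num
          have hxval : Real.log 2 ≤ x := by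
            rw [hxdef, h3]
            exact Real.log_le_log (by norm_num) (by norm_num)
          have hx069 : (0.693:ℝ) ≤ x := by linarith [Real.log_two_gt_d9]
          have hs2' : s^2 = 3 * x := by rw [hs2, h3]
          have hsge : (0.75:ℝ) ≤ s := by nlinarith [hspos]
          push_cast
          nlinarith [hspos, hμR, hsge]
        · have h4 : ((3:ℕ):ℝ) + 1 = 4 := by norm_num
          have hxval : x = Real.log 4 := by rw [hxdef, h4]
          have hlog4 : Real.log 4 = 2 * Real.log 2 := by
            rw [show (4:ℝ) = 2^2 by norm_num, Real.log_pow]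
            push_cast
            ring
          have hx138 : (1.386:ℝ) ≤ x := by
            rw [hxval, hlog4]
            linarith [Real.log_two_gt_d9]
          have hs2' : s^2 = 4 * x := by rw [hs2, h4]
          have hsge : (2.25:ℝ) ≤ s := by nlinarith [hspos]
          push_cast
          nlinarith [hspos, hμR, hsge]
      calc (Fintype.card P : ℝ) = (q:ℝ)^2+(q:ℝ)+1 := hcardP
        _ ≤ (μ:ℝ)*(2*s+2) := h47
        _ ≤ 2*D μ*s + 2 := hballoc
end
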